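/- arXiv:1602.08290 — 7 statements merged into one kernel-verified Lean document; each statement's English description precedes it below -/
import Mathlib

section
/- Consider a network whose conflict graph G is a path on n ≥ 2 vertices (node i adjacent to node i+1, i.e., interference range β = 1). Let θ_1,...,θ_n be positive reals with θ_i + θ_{i+1} < 1 for all 1 ≤ i ≤ n−1. If the back-off rates are set to ν_i = θ_i · (∏_{j=max(i,2)}^{min(i+1,n)−1} (1−θ_j)) / (∏_{j=max(i,2)}^{min(i+1,n)} (1−θ_{j−1}−θ_j)), then in the hard-core model π(z) ∝ ∏_i ν_i^{z_i} on independent sets of the path, the marginal probability that node i is active equals θ_i for every i. -/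
open scoped Classical
open Finset

/-- Weight of a 0-1 configuration `z` with back-off rates `ν`. -/
noncomputable def hcWeight {n : ℕ} (ν : Fin n → ℝ) (z : Fin n → Bool) : ℝ :=
  ∏ i, if z i then ν i else 1

/-- `z` is an independent-set indicator vector for adjacency `A`. -/
def hcIndep {n : ℕ} (A : Fin n → Fin n → Prop) (z : Fin n → Bool) : Prop :=
  ∀ i j, A i j → ¬(z i = true ∧ z j = true)

/-- Normalizing constant of the hard-core model. -/
noncomputable def hcZ (n : ℕ) (A : Fin n → Fin n → Prop) (ν : Fin n → ℝ) : ℝ :=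
  ∑ z : Fin n → Bool, if hcIndep A z then hcWeight ν z else 0

/-- Marginal activity probability of node `i` in the hard-core model. -/
noncomputable def hcMarginal (n : ℕ) (A : Fin n → Fin n → Prop) (ν : Fin n → ℝ)
    (i : Fin n) : ℝ :=
  (∑ z : Fin n → Bool, if hcIndep A z ∧ z i = true then hcWeight ν z else 0) / hcZ n A ν

/-!
Extend `θ` by zero outside `{1, …, n}` and run the Markov chain along the path in which an
active vertex is followed by an inactive one, while an inactive vertex `s - 1` is followed by an
active one with probability `θ s / (1 - θ (s - 1))`. Propagating the one-vertex marginals along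
the path shows that vertex `s` is active with probability `θ s`. The probability of a
configuration vanishes unless it is an independent set, and on independent sets it is a constant
times `∏_{z_s = 1} ν_s`: each transition factors as a constant times a factor for entering the
active state and one for leaving it, and the leaving factor at `s + 1` pairs with the entering
factor at `s` to give `ν_s`. So the chain is the hard-core distribution.
-/

theorem Fin.sum_univ_pi_snoc {M α : Type*} [AddCommMonoid M] [Fintype α] {m : ℕ}
    (f : (Fin (m + 1) → α) → M) :
    ∑ z, f z = ∑ z : Fin m → α, ∑ b, f (Fin.snoc z b) := by
  rw [← (Fin.snocEquiv fun _ => α).sum_comp, Fintype.sum_prod_type, Finset.sum_comm]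
  rfl

def pathAdj (n : ℕ) (a b : Fin n) : Prop := a.val + 1 = b.val ∨ b.val + 1 = a.val

theorem hcIndep_pathAdj_iff {m : ℕ} (z : Fin (m + 1) → Bool) :
    hcIndep (pathAdj (m + 1)) z ↔ ∀ i : Fin m, ¬(z i.castSucc = true ∧ z i.succ = true) := by
  refine ⟨fun h i => h _ _ (Or.inl (by simp)), fun h a b hab => ?_⟩
  wlog hab' : a.val + 1 = b.val generalizing a b
  · exact fun hz => this b a (hab.symm) (hab.resolve_left hab') hz.symm
  obtain ⟨i, rfl, rfl⟩ : ∃ i : Fin m, i.castSucc = a ∧ i.succ = b :=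
    ⟨⟨a.val, by omega⟩, Fin.ext rfl, Fin.ext (by simp [hab'])⟩
  exact h i

namespace PathChain

variable (θ : ℕ → ℝ)

/-- `kernel θ s a b` is the probability that vertex `s` is in state `b` given that vertex
`s - 1` is in state `a`. -/
noncomputable def kernel (s : ℕ) (a b : Bool) : ℝ :=
  if a then (if b then 0 else 1)
  else if b then θ s / (1 - θ (s - 1)) else (1 - θ (s - 1) - θ s) / (1 - θ (s - 1))

/-- Entry `i` of `z` is vertex `i + 1`; an inactive vertex `0` precedes vertex `1`. -/
noncomputable def weight {m : ℕ} (z : Fin (m + 1) → Bool) : ℝ :=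
  ∏ i : Fin (m + 1), kernel θ (i + 1) ((Fin.cons false (Fin.init z) : Fin (m + 1) → Bool) i) (z i)

def bernoulliMass (p : ℝ) (b : Bool) : ℝ := if b then p else 1 - p

noncomputable def enterFactor (s : ℕ) : ℝ := θ s / (1 - θ (s - 1) - θ s)

noncomputable def leaveFactor (s : ℕ) : ℝ := (1 - θ (s - 1)) / (1 - θ (s - 1) - θ s)

noncomputable def rate (s : ℕ) : ℝ := enterFactor θ s * leaveFactor θ (s + 1)

variable {θ}

theorem kernel_true_add_false {s : ℕ} (h : θ (s - 1) ≠ 1) (a : Bool) :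
    kernel θ s a true + kernel θ s a false = 1 := by
  have : 1 - θ (s - 1) ≠ 0 := sub_ne_zero.mpr h.symm
  cases a
  · simp only [kernel, Bool.false_eq_true, if_false, if_true]
    field_simp
    ring
  · simp [kernel]

theorem sum_bernoulliMass_mul_kernel {s : ℕ} (h : θ (s - 1) ≠ 1) (b : Bool) :
    ∑ a, bernoulliMass (θ (s - 1)) a * kernel θ s a b = bernoulliMass (θ s) b := by
  have : 1 - θ (s - 1) ≠ 0 := sub_ne_zero.mpr h.symm
  cases b <;>
  · simp only [bernoulliMass, kernel, Fintype.sum_bool, Bool.false_eq_true, if_false, if_true]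
    field_simp
    ring

theorem weight_snoc {m : ℕ} (z : Fin (m + 1) → Bool) (b : Bool) :
    weight θ (Fin.snoc z b) = weight θ z * kernel θ (m + 2) (z (Fin.last m)) b := by
  have hprev : (Fin.cons false z : Fin (m + 2) → Bool) =
      Fin.snoc (Fin.cons false (Fin.init z)) (z (Fin.last m)) := by
    rw [← Fin.cons_snoc_eq_snoc_cons, Fin.snoc_init_self]
  simp only [weight, Fin.prod_univ_castSucc, Fin.init_snoc, hprev, Fin.snoc_castSucc,
    Fin.snoc_last, Fin.val_castSucc, Fin.val_last]

theorem sum_weight_ite_last (h0 : θ 0 = 0) (hθ : ∀ s, θ s ≠ 1) (m : ℕ) (b : Bool) :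
    ∑ z : Fin (m + 1) → Bool, (if z (Fin.last m) = b then weight θ z else 0) =
      bernoulliMass (θ (m + 1)) b := by
  induction m generalizing b with
  | zero =>
    rw [Fin.sum_univ_pi_snoc]
    cases b <;> simp [Fin.snoc_zero, weight, kernel, bernoulliMass, h0]
  | succ m ih =>
    have hsplit : ∀ z : Fin (m + 1) → Bool, weight θ z * kernel θ (m + 2) (z (Fin.last m)) b =
        ∑ a, (if z (Fin.last m) = a then weight θ z else 0) * kernel θ (m + 2) a b := by
      intro z
      cases z (Fin.last m) <;> simp
    rw [Fin.sum_univ_pi_snoc]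
    simp only [Fin.snoc_last, weight_snoc, Finset.sum_ite_eq', Finset.mem_univ, if_true, hsplit]
    rw [Finset.sum_comm]
    simp only [← Finset.sum_mul, ih]
    exact sum_bernoulliMass_mul_kernel (s := m + 2) (hθ _) b

theorem sum_weight (h0 : θ 0 = 0) (hθ : ∀ s, θ s ≠ 1) (m : ℕ) :
    ∑ z : Fin (m + 1) → Bool, weight θ z = 1 := by
  calc ∑ z : Fin (m + 1) → Bool, weight θ z
      = ∑ b, ∑ z : Fin (m + 1) → Bool, if z (Fin.last m) = b then weight θ z else 0 := by
        rw [Finset.sum_comm]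
        simp only [Finset.sum_ite_eq, Finset.mem_univ, if_true]
    _ = 1 := by simp [sum_weight_ite_last h0 hθ, bernoulliMass]

theorem sum_weight_ite_apply (h0 : θ 0 = 0) (hθ : ∀ s, θ s ≠ 1) {m : ℕ} (k : Fin (m + 1)) :
    ∑ z : Fin (m + 1) → Bool, (if z k then weight θ z else 0) = θ (k + 1) := by
  induction m with
  | zero =>
    obtain rfl : k = Fin.last 0 := Fin.fin_one_eq_zero k
    simpa [bernoulliMass] using sum_weight_ite_last h0 hθ 0 true
  | succ m ih =>
    cases k using Fin.lastCases with
    | last => simpa [bernoulliMass] using sum_weight_ite_last h0 hθ (m + 1) true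
    | cast k =>
      have hrow : ∀ z : Fin (m + 1) → Bool,
          ∑ c, (if z k then weight θ z * kernel θ (m + 2) (z (Fin.last m)) c else 0) =
            if z k then weight θ z else 0 := by
        intro z
        split_ifs
        · rw [Fintype.sum_bool, ← mul_add, kernel_true_add_false (s := m + 2) (hθ _), mul_one]
        · simp
      rw [Fin.sum_univ_pi_snoc]
      simp only [Fin.snoc_castSucc, weight_snoc, Fin.val_castSucc, hrow]
      exact ih k

theorem kernel_eq_mul {s : ℕ} (h1 : θ (s - 1) ≠ 1) (h2 : θ (s - 1) + θ s ≠ 1) {a b : Bool}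
    (hab : ¬(a = true ∧ b = true)) :
    kernel θ s a b = kernel θ s false false * (if b then enterFactor θ s else 1) *
      (if a then leaveFactor θ s else 1) := by
  have h1' : 1 - θ (s - 1) ≠ 0 := sub_ne_zero.mpr h1.symm
  have h2' : 1 - θ (s - 1) - θ s ≠ 0 := by rwa [sub_sub, sub_ne_zero, ne_comm]
  cases a <;> cases b <;> simp_all [kernel, enterFactor, leaveFactor]

theorem weight_eq_prod_rate (h1 : ∀ s, θ s ≠ 1) (h2 : ∀ s, θ (s - 1) + θ s ≠ 1) {m : ℕ}
    (hend : θ (m + 2) = 0) (z : Fin (m + 1) → Bool)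
    (hz : ∀ i : Fin m, ¬(z i.castSucc = true ∧ z i.succ = true)) :
    weight θ z = (∏ i : Fin (m + 1), kernel θ (i + 1) false false) *
      ∏ i : Fin (m + 1), if z i then rate θ (i + 1) else 1 := by
  set p : Fin (m + 1) → Bool := Fin.cons false (Fin.init z)
  have hp : ∀ i, ¬(p i = true ∧ z i = true) := by
    intro i
    cases i using Fin.cases with
    | zero => simp [p]
    | succ j => simpa [p, Fin.init] using hz j
  have hleave : (∏ i : Fin (m + 1), if p i then leaveFactor θ (i + 1) else 1) =
      ∏ j : Fin m, if z j.castSucc then leaveFactor θ (j + 2) else 1 := by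
    simp [Fin.prod_univ_succ, p, Fin.init]
  have hlast : leaveFactor θ (m + 2) = 1 := by
    have : 1 - θ (m + 1) ≠ 0 := sub_ne_zero.mpr (h1 _).symm
    simp [leaveFactor, hend, this]
  have hrate : (∏ i : Fin (m + 1), if z i then rate θ (i + 1) else 1) =
      (∏ i : Fin (m + 1), if z i then enterFactor θ (i + 1) else 1) *
        ∏ j : Fin m, if z j.castSucc then leaveFactor θ (j + 2) else 1 := by
    have hsplit : ∀ i : Fin (m + 1), (if z i then rate θ (i + 1) else 1) =
        (if z i then enterFactor θ (i + 1) else 1) *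
          (if z i then leaveFactor θ (i + 2) else 1) := by
      intro i
      cases z i <;> simp [rate]
    rw [Finset.prod_congr rfl fun i _ => hsplit i, Finset.prod_mul_distrib,
      Fin.prod_univ_castSucc (n := m) (fun i => if z i then leaveFactor θ (i + 2) else 1)]
    simp [hlast]
  calc weight θ z
      = ∏ i : Fin (m + 1), kernel θ (i + 1) false false *
          (if z i then enterFactor θ (i + 1) else 1) *
          (if p i then leaveFactor θ (i + 1) else 1) :=
        Finset.prod_congr rfl fun i _ => kernel_eq_mul (h1 _) (h2 _) (hp i)
    _ = _ := by rw [Finset.prod_mul_distrib, Finset.prod_mul_distrib, hleave, hrate, mul_assoc]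

theorem weight_eq_zero {m : ℕ} (z : Fin (m + 1) → Bool) (i : Fin m)
    (hi : z i.castSucc = true ∧ z i.succ = true) : weight θ z = 0 :=
  Finset.prod_eq_zero (Finset.mem_univ i.succ) (by simp [Fin.init, hi, kernel])

theorem weight_eq_ite_hcWeight (h1 : ∀ s, θ s ≠ 1) (h2 : ∀ s, θ (s - 1) + θ s ≠ 1) {m : ℕ}
    (hend : θ (m + 2) = 0) (z : Fin (m + 1) → Bool) :
    weight θ z = if hcIndep (pathAdj (m + 1)) z then
      (∏ i : Fin (m + 1), kernel θ (i + 1) false false) *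
        hcWeight (fun i : Fin (m + 1) => rate θ (i + 1)) z else 0 := by
  split_ifs with hz
  · exact weight_eq_prod_rate h1 h2 hend z ((hcIndep_pathAdj_iff z).mp hz)
  · rw [hcIndep_pathAdj_iff] at hz
    obtain ⟨i, hi⟩ := not_forall.mp hz
    exact weight_eq_zero z i (not_not.mp hi)

theorem hcMarginal_pathAdj_rate (h0 : θ 0 = 0) (h1 : ∀ s, θ s ≠ 1)
    (h2 : ∀ s, θ (s - 1) + θ s ≠ 1) {m : ℕ} (hend : θ (m + 2) = 0) (k : Fin (m + 1)) :
    hcMarginal (m + 1) (pathAdj (m + 1)) (fun i => rate θ (i + 1)) k = θ (k + 1) := by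
  set c := ∏ i : Fin (m + 1), kernel θ (i + 1) false false
  have hc : c ≠ 0 := by
    refine Finset.prod_ne_zero_iff.mpr fun i _ => div_ne_zero ?_ (sub_ne_zero.mpr (h1 _).symm)
    rw [sub_sub, sub_ne_zero]
    exact (h2 _).symm
  have hZ : hcZ (m + 1) (pathAdj (m + 1)) (fun i => rate θ (i + 1)) * c = 1 := by
    rw [hcZ, Finset.sum_mul, ← sum_weight h0 h1 m]
    refine Finset.sum_congr rfl fun z _ => ?_
    rw [weight_eq_ite_hcWeight h1 h2 hend]
    split_ifs <;> ring
  have hN : (∑ z : Fin (m + 1) → Bool, if hcIndep (pathAdj (m + 1)) z ∧ z k = true then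
      hcWeight (fun i : Fin (m + 1) => rate θ (i + 1)) z else 0) * c = θ (k + 1) := by
    rw [Finset.sum_mul, ← sum_weight_ite_apply h0 h1 k]
    refine Finset.sum_congr rfl fun z _ => ?_
    rw [weight_eq_ite_hcWeight h1 h2 hend, ite_and]
    split_ifs <;> ring
  rw [hcMarginal, ← mul_div_mul_right _ _ hc, hN, hZ, div_one]

end PathChain

section Truncation

variable {θ : ℕ → ℝ} {n : ℕ}

theorem rate_indicator_Icc (hn : 2 ≤ n) (h1 : θ 1 ≠ 1) (hn1 : θ n ≠ 1) {s : ℕ} (hs1 : 1 ≤ s)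
    (hsn : s ≤ n) :
    PathChain.rate ((Set.Icc 1 n).indicator θ) s =
      θ s * (∏ j ∈ Finset.Icc (max s 2) (min (s + 1) n - 1), (1 - θ j)) /
        ∏ j ∈ Finset.Icc (max s 2) (min (s + 1) n), (1 - θ (j - 1) - θ j) := by
  simp only [PathChain.rate, PathChain.enterFactor, PathChain.leaveFactor]
  rcases hs1.lt_or_eq with hs | rfl
  · rcases Nat.lt_or_ge s n with hsn' | hns
    · rw [show max s 2 = s by omega, show min (s + 1) n = s + 1 by omega]
      simp [Set.indicator, Finset.prod_Icc_succ_top, hs1, hsn, hsn', show 1 ≤ s - 1 by omega,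
        show s ≤ n + 1 by omega, mul_div_mul_comm]
    · obtain rfl : s = n := by omega
      rw [show max s 2 = s by omega, show min (s + 1) s = s by omega]
      have : 1 - θ s ≠ 0 := sub_ne_zero.mpr hn1.symm
      simp [Set.indicator, hs1, show 1 ≤ s - 1 by omega,
        Finset.Icc_eq_empty (show ¬s ≤ s - 1 by omega), div_self this]
  · rw [show max 1 2 = 2 by omega, show min (1 + 1) n = 2 by omega]
    have : 1 - θ 1 ≠ 0 := sub_ne_zero.mpr h1.symm
    simp [Set.indicator, hn, show 1 ≤ n by omega]
    field_simp

theorem lt_one_of_pos_of_add_lt_one (hn : 2 ≤ n) (hpos : ∀ i, 1 ≤ i → i ≤ n → 0 < θ i)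
    (hθ : ∀ i, 1 ≤ i → i + 1 ≤ n → θ i + θ (i + 1) < 1) (s : ℕ) (hs1 : 1 ≤ s) (hsn : s ≤ n) :
    θ s < 1 := by
  rcases hsn.lt_or_eq with hlt | rfl
  · linarith [hθ s hs1 hlt, hpos (s + 1) (by omega) hlt]
  · have hpair := hθ (s - 1) (by omega) (by omega)
    rw [Nat.sub_add_cancel hs1] at hpair
    linarith [hpos (s - 1) (by omega) (by omega)]

theorem indicator_Icc_lt_one (hlt : ∀ s, 1 ≤ s → s ≤ n → θ s < 1) (s : ℕ) :
    (Set.Icc 1 n).indicator θ s < 1 := by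
  by_cases hs : s ∈ Set.Icc 1 n
  · rw [Set.indicator_of_mem hs]
    exact hlt s hs.1 hs.2
  · rw [Set.indicator_of_notMem hs]
    exact one_pos

theorem indicator_Icc_pred_add_lt_one (hlt : ∀ s, 1 ≤ s → s ≤ n → θ s < 1)
    (hθ : ∀ i, 1 ≤ i → i + 1 ≤ n → θ i + θ (i + 1) < 1) (s : ℕ) :
    (Set.Icc 1 n).indicator θ (s - 1) + (Set.Icc 1 n).indicator θ s < 1 := by
  by_cases hs : 2 ≤ s ∧ s ≤ n
  · rw [Set.indicator_of_mem (by simp; omega), Set.indicator_of_mem (by simp; omega)]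
    have hpair := hθ (s - 1) (by omega) (by omega)
    rwa [Nat.sub_add_cancel (by omega)] at hpair
  · rcases not_and_or.mp hs with hs | hs
    · rw [Set.indicator_of_notMem (by simp; omega), zero_add]
      exact indicator_Icc_lt_one hlt s
    · rw [Set.indicator_of_notMem (s := Set.Icc 1 n) (a := s) (by simp; omega), add_zero]
      exact indicator_Icc_lt_one hlt (s - 1)

end Truncation

/-- line network with interference range β = 1 (a path on n ≥ 2 vertices,
1-based vertices i = 1,…,n, vertex i corresponding to `k : Fin n` with `k.val + 1 = i`).
With the stated back-off rates, every marginal matches its target throughput. -/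
theorem stmt1 (n : ℕ) (hn : 2 ≤ n) (θ : ℕ → ℝ) (ν : Fin n → ℝ)
    (hθpos : ∀ i, 1 ≤ i → i ≤ n → 0 < θ i)
    (hθ : ∀ i, 1 ≤ i → i + 1 ≤ n → θ i + θ (i + 1) < 1)
    (hν : ∀ k : Fin n, ν k =
      θ (k.val + 1) *
        (∏ j ∈ Finset.Icc (max (k.val + 1) 2) (min (k.val + 2) n - 1), (1 - θ j)) /
        (∏ j ∈ Finset.Icc (max (k.val + 1) 2) (min (k.val + 2) n),
          (1 - θ (j - 1) - θ j))) :
    ∀ k : Fin n,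
      hcMarginal n (fun a b : Fin n => a.val + 1 = b.val ∨ b.val + 1 = a.val) ν k =
        θ (k.val + 1) := by
  intro k
  have hlt := lt_one_of_pos_of_add_lt_one hn hθpos hθ
  have hrate : ν = fun i : Fin n => PathChain.rate ((Set.Icc 1 n).indicator θ) (i + 1) := by
    funext i
    rw [hν i, rate_indicator_Icc hn (hlt 1 le_rfl (by omega)).ne (hlt n (by omega) le_rfl).ne
      (Nat.le_add_left 1 i) i.isLt]
  obtain ⟨m, rfl⟩ : ∃ m, n = m + 1 := ⟨n - 1, by omega⟩
  have hmarginal := PathChain.hcMarginal_pathAdj_rate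
    (Set.indicator_of_notMem (by simp) θ)
    (fun s => (indicator_Icc_lt_one hlt s).ne)
    (fun s => (indicator_Icc_pred_add_lt_one hlt hθ s).ne)
    (Set.indicator_of_notMem (by simp) θ) k
  rwa [← hrate, Set.indicator_of_mem (Set.mem_Icc.mpr ⟨Nat.le_add_left 1 k, k.isLt⟩)] at hmarginal
end

section
/- Let G be a finite tree (acyclic connected graph) on vertices {1,...,n}, n ≥ 2, with N_i the neighbor set of vertex i. Let θ_1,...,θ_n be positive reals with θ_i + θ_j < 1 for every edge (i,j). Set ν_i = θ_i (1−θ_i)^{|N_i|−1} / ∏_{j∈N_i}(1−θ_i−θ_j). Then in the hard-core distribution π(z) ∝ ∏_i ν_i^{z_i} over independent-set indicator vectors of G, the marginal probability that vertex i is active equals θ_i for all i. -/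
/-
On a forest, a law with site marginals `p_v` and edge marginals `p_uv` can be written in Bethe
form `∏_v p_v(z_v) ∏_{uv} p_uv(z_u, z_v) / (p_u(z_u) p_v(z_v))`. Take `p_v(1) = θ_v` and for `p_uv`
the law with marginals `θ_u, θ_v` that never has both spins `1`. This weight vanishes off
independent sets, and switching on a vertex `i` of an independent set multiplies it by exactly
`ν_i`, so it is proportional to the hard-core weight. Its site marginals are the `θ_v`, by removing
leaves: summing out the spin of a leaf `ℓ` with neighbour `p` leaves the weight of the forest
without the edge `ℓp`, since `∑_a p_ℓp(a, b) / p_p(b) = 1`.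
-/

open scoped Classical
open Finset

open Function SimpleGraph

section

variable {V : Type*} [Fintype V] [DecidableEq V]

lemma prod_apply_update {β M : Type*} [CommMonoid M] (f : V → β → M) (z : V → β) (i : V)
    (b : β) : ∏ v, f v (update z i b v) = f i b * ∏ v ∈ univ.erase i, f v (z v) := by
  rw [← mul_prod_erase univ _ (mem_univ i), update_self]
  congr 1
  exact prod_congr rfl fun v hv => by rw [update_of_ne (ne_of_mem_erase hv)]

lemma sum_sum_update {M : Type*} [AddCommMonoid M] (ℓ : V) (F : (V → Bool) → M) :
    ∑ z, ∑ b, F (update z ℓ b) = 2 • ∑ z, F z := by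
  let flip : Equiv.Perm (V → Bool) := Involutive.toPerm (fun z => update z ℓ (!z ℓ)) fun z => by
    ext v
    by_cases hv : v = ℓ <;> simp [hv]
  have hpair : ∀ z, ∑ b, F (update z ℓ b) = F z + F (flip z) := by
    intro z
    have hself : update z ℓ (z ℓ) = z := update_eq_self ℓ z
    have hflip : flip z = update z ℓ (!z ℓ) := rfl
    cases hz : z ℓ <;> rw [hz] at hself hflip <;> simp [hflip, hself, add_comm]
  rw [sum_congr rfl fun z _ => hpair z, sum_add_distrib, Equiv.sum_comp, two_nsmul]

end

namespace SimpleGraph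

variable {V : Type*}

lemma IsAcyclic.exists_adj_forall_adj_eq [Finite V] {G : SimpleGraph V} (hG : G.IsAcyclic)
    (hE : G.edgeSet.Nonempty) : ∃ ℓ p, G.Adj ℓ p ∧ ∀ v, G.Adj ℓ v → v = p := by
  obtain ⟨e, he⟩ := hE
  induction e with
  | _ a b =>
    have : Nonempty V := ⟨a⟩
    obtain ⟨u, v, q, hq, hmax⟩ := Walk.exists_isPath_forall_isPath_length_le_length G
    have hlen : 1 ≤ q.length := hmax a b _ (Path.singleton (G := G) he).2
    have hnil : ¬q.Nil := fun h => by
      have := Walk.length_eq_zero_iff.2 h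
      omega
    refine ⟨u, q.snd, q.adj_snd hnil, fun w hw => hG.eq_snd_of_adj_start hq hw ?_⟩
    by_contra hwq
    have := hmax w v (.cons hw.symm q) (hq.cons hwq)
    simp at this

variable [Fintype V] [DecidableEq V]

lemma prod_incidenceFinset_eq_prod_neighborFinset {M : Type*} [CommMonoid M]
    (G : SimpleGraph V) [DecidableRel G.Adj] (i : V) (f : Sym2 V → M) :
    ∏ e ∈ G.incidenceFinset i, f e = ∏ j ∈ G.neighborFinset i, f s(i, j) := by
  have himage : (G.neighborFinset i).image (fun j => s(i, j)) = G.incidenceFinset i := by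
    ext e
    induction e with
    | _ a b =>
      simp only [mem_image, mem_neighborFinset, mem_incidenceFinset, mk'_mem_incidenceSet_iff]
      constructor
      · rintro ⟨j, hj, he⟩
        rcases Sym2.eq_iff.1 he with ⟨rfl, rfl⟩ | ⟨rfl, rfl⟩
        exacts [⟨hj, .inl rfl⟩, ⟨hj.symm, .inr rfl⟩]
      · rintro ⟨hab, rfl | rfl⟩
        exacts [⟨b, hab, rfl⟩, ⟨a, hab.symm, Sym2.eq_swap⟩]
  rw [← himage, prod_image fun _ _ _ _ h => Sym2.congr_right.1 h]

lemma prod_edgeFinset_eq_prod_neighborFinset_mul {M : Type*} [CommMonoid M]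
    (G : SimpleGraph V) [DecidableRel G.Adj] (i : V) (f : Sym2 V → M) :
    ∏ e ∈ G.edgeFinset, f e
      = (∏ j ∈ G.neighborFinset i, f s(i, j)) * ∏ e ∈ G.edgeFinset with i ∉ e, f e := by
  rw [← prod_incidenceFinset_eq_prod_neighborFinset, incidenceFinset_eq_filter,
    prod_filter_mul_prod_filter_not]

lemma edgeFinset_deleteEdges_singleton (G : SimpleGraph V) [DecidableRel G.Adj] (e : Sym2 V) :
    (G.deleteEdges {e}).edgeFinset = G.edgeFinset.erase e := by
  ext e'
  simp [and_comm]

end SimpleGraph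

noncomputable section TreeWeight

variable {V : Type*}

def siteWeight (θ : V → ℝ) (v : V) (b : Bool) : ℝ :=
  if b then θ v else 1 - θ v

/-- `p_ij(a, b) / (p_i(a) p_j(b))` for the law `p_ij` of a pair of spins with single-site
marginals `p_i(true) = θ i`, `p_j(true) = θ j` that forbids both spins being `true`. -/
def edgeRatio (θ : V → ℝ) (i j : V) : Bool → Bool → ℝ
  | true, true => 0
  | true, false => (1 - θ j)⁻¹
  | false, true => (1 - θ i)⁻¹
  | false, false => (1 - θ i - θ j) / ((1 - θ i) * (1 - θ j))

lemma edgeRatio_comm (θ : V → ℝ) (i j : V) (a b : Bool) :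
    edgeRatio θ i j a b = edgeRatio θ j i b a := by
  cases a <;> cases b <;> simp only [edgeRatio]
  rw [mul_comm, sub_right_comm]

def edgeRatioSym (θ : V → ℝ) (z : V → Bool) : Sym2 V → ℝ :=
  Sym2.lift ⟨fun i j => edgeRatio θ i j (z i) (z j), fun i j => edgeRatio_comm θ i j _ _⟩

@[simp] lemma edgeRatioSym_mk (θ : V → ℝ) (z : V → Bool) (i j : V) :
    edgeRatioSym θ z s(i, j) = edgeRatio θ i j (z i) (z j) := rfl

lemma sum_siteWeight_mul_edgeRatio {θ : V → ℝ} {i j : V} (hi : θ i ≠ 1) (hj : θ j ≠ 1)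
    (c : Bool) : ∑ a, siteWeight θ i a * edgeRatio θ i j a c = 1 := by
  have hi' : 1 - θ i ≠ 0 := sub_ne_zero.2 hi.symm
  have hj' : 1 - θ j ≠ 0 := sub_ne_zero.2 hj.symm
  cases c <;> simp only [Fintype.sum_bool, siteWeight, edgeRatio, if_true, Bool.false_eq_true,
    if_false] <;> field_simp <;> ring

variable [Fintype V] [DecidableEq V]

def treeWeight (G : SimpleGraph V) [DecidableRel G.Adj] (θ : V → ℝ) (z : V → Bool) : ℝ :=
  (∏ v, siteWeight θ v (z v)) * ∏ e ∈ G.edgeFinset, edgeRatioSym θ z e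

lemma exists_treeWeight_update (G : SimpleGraph V) [DecidableRel G.Adj] (θ : V → ℝ)
    (z : V → Bool) (i : V) :
    ∃ W, ∀ b, treeWeight G θ (update z i b)
      = siteWeight θ i b * (∏ j ∈ G.neighborFinset i, edgeRatio θ i j b (z j)) * W := by
  refine ⟨(∏ v ∈ univ.erase i, siteWeight θ v (z v)) *
    ∏ e ∈ G.edgeFinset with i ∉ e, edgeRatioSym θ z e, fun b => ?_⟩
  have hnbr : ∀ j ∈ G.neighborFinset i,
      edgeRatioSym θ (update z i b) s(i, j) = edgeRatio θ i j b (z j) := fun j hj => by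
    rw [edgeRatioSym_mk, update_self,
      update_of_ne (G.ne_of_adj ((mem_neighborFinset ..).1 hj)).symm]
  have hrest : ∀ e ∈ {e ∈ G.edgeFinset | i ∉ e},
      edgeRatioSym θ (update z i b) e = edgeRatioSym θ z e := by
    intro e he
    induction e with
    | _ a c =>
      obtain ⟨ha, hc⟩ : a ≠ i ∧ c ≠ i := by
        simp only [mem_filter, Sym2.mem_iff, not_or] at he
        exact ⟨Ne.symm he.2.1, Ne.symm he.2.2⟩
      simp only [edgeRatioSym_mk, update_of_ne ha, update_of_ne hc]
  rw [treeWeight, prod_apply_update, prod_edgeFinset_eq_prod_neighborFinset_mul G i,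
    prod_congr rfl hnbr, prod_congr rfl hrest]
  ring

lemma treeWeight_eq_deleteEdges_mul {G : SimpleGraph V} [DecidableRel G.Adj] (θ : V → ℝ)
    {ℓ p : V} (h : G.Adj ℓ p) (z : V → Bool) :
    treeWeight G θ z
      = treeWeight (G.deleteEdges {s(ℓ, p)}) θ z * edgeRatio θ ℓ p (z ℓ) (z p) := by
  have he : s(ℓ, p) ∈ G.edgeFinset := mem_edgeFinset.2 h
  rw [treeWeight, treeWeight, edgeFinset_deleteEdges_singleton, ← mul_prod_erase _ _ he,
    edgeRatioSym_mk]
  ring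

lemma sum_treeWeight_mul_of_leaf {G : SimpleGraph V} [DecidableRel G.Adj] (θ : V → ℝ)
    {ℓ p : V} (hadj : G.Adj ℓ p) (hleaf : ∀ v, G.Adj ℓ v → v = p) (φ : Bool → ℝ)
    (ψ : (V → Bool) → ℝ) (hψ : ∀ z b, ψ (update z ℓ b) = ψ z) :
    ∑ z, treeWeight G θ z * φ (z ℓ) * ψ z
      = ∑ z, treeWeight (G.deleteEdges {s(ℓ, p)}) θ z
          * (∑ a, siteWeight θ ℓ a * edgeRatio θ ℓ p a (z p) * φ a) * ψ z := by
  have hiso : (G.deleteEdges {s(ℓ, p)}).neighborFinset ℓ = ∅ := by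
    ext v
    simp only [mem_neighborFinset, deleteEdges_adj, Set.mem_singleton_iff, notMem_empty,
      iff_false, not_and, not_not]
    intro h
    rw [hleaf v h]
  have hfiber : ∀ z, ∑ b, treeWeight G θ (update z ℓ b) * φ (update z ℓ b ℓ) * ψ (update z ℓ b)
      = ∑ b, treeWeight (G.deleteEdges {s(ℓ, p)}) θ (update z ℓ b)
          * (∑ a, siteWeight θ ℓ a * edgeRatio θ ℓ p a (update z ℓ b p) * φ a)
          * ψ (update z ℓ b) := by
    intro z
    obtain ⟨W, hW⟩ := exists_treeWeight_update (G.deleteEdges {s(ℓ, p)}) θ z ℓ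
    simp only [treeWeight_eq_deleteEdges_mul θ hadj, hW, hiso, prod_empty, hψ, update_self,
      update_of_ne hadj.ne.symm, Fintype.sum_bool, siteWeight]
    simp only [if_true, Bool.false_eq_true, if_false]
    ring
  have hL := sum_sum_update ℓ fun z => treeWeight G θ z * φ (z ℓ) * ψ z
  have hR := sum_sum_update ℓ fun z => treeWeight (G.deleteEdges {s(ℓ, p)}) θ z
    * (∑ a, siteWeight θ ℓ a * edgeRatio θ ℓ p a (z p) * φ a) * ψ z
  rw [sum_congr rfl fun z _ => hfiber z] at hL
  exact nsmul_right_injective two_ne_zero (hL.symm.trans hR)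

lemma sum_treeWeight_mul_of_edgeFinset_eq_empty {G : SimpleGraph V} [DecidableRel G.Adj]
    (θ : V → ℝ) (hE : G.edgeFinset = ∅) (i : V) (g : Bool → ℝ) :
    ∑ z, treeWeight G θ z * g (z i) = ∑ b, siteWeight θ i b * g b := by
  have hprod : ∀ z : V → Bool, treeWeight G θ z * g (z i)
      = ∏ v, siteWeight θ v (z v) * if v = i then g (z v) else 1 := by
    intro z
    rw [treeWeight, hE, prod_empty, mul_one, prod_mul_distrib, prod_ite_eq' univ i]
    simp
  rw [sum_congr rfl fun z _ => hprod z,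
    ← Fintype.prod_sum fun v b => siteWeight θ v b * if v = i then g b else 1,
    prod_eq_single i (fun v _ hv => by simp [hv, siteWeight]) (by simp)]
  simp

theorem SimpleGraph.IsAcyclic.sum_treeWeight_mul {G : SimpleGraph V} [DecidableRel G.Adj]
    (hG : G.IsAcyclic) {θ : V → ℝ} (hθ : ∀ i j, G.Adj i j → θ i ≠ 1) (i : V) (g : Bool → ℝ) :
    ∑ z, treeWeight G θ z * g (z i) = ∑ b, siteWeight θ i b * g b := by
  obtain ⟨k, hk⟩ : ∃ k, #G.edgeFinset = k := ⟨_, rfl⟩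
  induction k generalizing G i g with
  | zero => exact sum_treeWeight_mul_of_edgeFinset_eq_empty θ (card_eq_zero.1 hk) i g
  | succ k ih =>
    obtain ⟨ℓ, p, hadj, hleaf⟩ : ∃ ℓ p, G.Adj ℓ p ∧ ∀ v, G.Adj ℓ v → v = p := by
      refine hG.exists_adj_forall_adj_eq ?_
      obtain ⟨e, he⟩ := card_pos.1 (by omega : 0 < #G.edgeFinset)
      exact ⟨e, mem_edgeFinset.1 he⟩
    have hk' : #(G.deleteEdges {s(ℓ, p)}).edgeFinset = k := by
      rw [edgeFinset_deleteEdges_singleton, card_erase_of_mem (mem_edgeFinset.2 hadj), hk]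
      rfl
    have IH := fun j g' => ih (G := G.deleteEdges {s(ℓ, p)}) (hG.anti (deleteEdges_le _))
      (fun i j h => hθ i j (deleteEdges_adj.1 h).1) j g' hk'
    by_cases hi : i = ℓ
    · subst hi
      have hleaf_sum := sum_treeWeight_mul_of_leaf θ hadj hleaf g (fun _ => 1) fun _ _ => rfl
      simp only [mul_one] at hleaf_sum
      rw [hleaf_sum, IH p fun c => ∑ a, siteWeight θ i a * edgeRatio θ i p a c * g a]
      calc ∑ c, siteWeight θ p c * ∑ a, siteWeight θ i a * edgeRatio θ i p a c * g a
          = ∑ a, siteWeight θ i a * g a * ∑ c, siteWeight θ p c * edgeRatio θ p i c a := by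
            simp_rw [mul_sum]
            rw [sum_comm]
            refine sum_congr rfl fun a _ => sum_congr rfl fun c _ => ?_
            rw [edgeRatio_comm]
            ring
        _ = ∑ a, siteWeight θ i a * g a := by
            simp only [sum_siteWeight_mul_edgeRatio (hθ p i hadj.symm) (hθ i p hadj), mul_one]
    · have hleaf_sum := sum_treeWeight_mul_of_leaf θ hadj hleaf (fun _ => 1) (fun z => g (z i))
        fun z b => by rw [update_of_ne hi]
      simp only [mul_one, sum_siteWeight_mul_edgeRatio (hθ ℓ p hadj) (hθ p ℓ hadj.symm)]
        at hleaf_sum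
      rw [hleaf_sum, IH i g]

end TreeWeight

section HardCore

variable {n : ℕ}

lemma treeWeight_eq_zero_of_not_hcIndep {G : SimpleGraph (Fin n)} [DecidableRel G.Adj]
    (θ : Fin n → ℝ) {z : Fin n → Bool} (hz : ¬hcIndep G.Adj z) : treeWeight G θ z = 0 := by
  simp only [hcIndep, not_forall, not_not] at hz
  obtain ⟨i, j, hij, hi, hj⟩ := hz
  have he : s(i, j) ∈ G.edgeFinset := mem_edgeFinset.2 hij
  rw [treeWeight, prod_eq_zero he (by simp [hi, hj, edgeRatio]), mul_zero]

lemma hcWeight_update_true (ν : Fin n → ℝ) (z : Fin n → Bool) (i : Fin n) :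
    hcWeight ν (update z i true) = ν i * hcWeight ν (update z i false) := by
  have h := prod_apply_update (fun v (b : Bool) => if b then ν v else 1) z i
  simp [hcWeight, h]

/-- The rate `ν_i` is the factor by which switching on `i`, with all neighbours off, changes the
Bethe weight. -/
lemma mul_prod_edgeRatio_false_false {V : Type*} {θ : V → ℝ} {i : V} {s : Finset V}
    (hs : s.Nonempty) (hi : θ i ≠ 1) (hs₁ : ∀ j ∈ s, θ i + θ j ≠ 1) :
    (θ i * (1 - θ i) ^ (#s - 1) / ∏ j ∈ s, (1 - θ i - θ j))
        * ((1 - θ i) * ∏ j ∈ s, edgeRatio θ i j false false)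
      = θ i * ∏ j ∈ s, edgeRatio θ i j true false := by
  obtain ⟨d, hd⟩ : ∃ d, #s = d + 1 := ⟨#s - 1, by have := hs.card_pos; omega⟩
  have hi' : 1 - θ i ≠ 0 := sub_ne_zero.2 hi.symm
  have hB : ∏ j ∈ s, (1 - θ i - θ j) ≠ 0 :=
    prod_ne_zero_iff.2 fun j hj => by rw [sub_sub]; exact sub_ne_zero.2 (hs₁ j hj).symm
  simp only [edgeRatio]
  rw [prod_div_distrib, prod_mul_distrib, prod_const, prod_inv_distrib, hd, Nat.add_sub_cancel]
  field_simp
  ring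

lemma treeWeight_update_true {G : SimpleGraph (Fin n)} [DecidableRel G.Adj] {θ ν : Fin n → ℝ}
    (hθ₁ : ∀ i j, G.Adj i j → θ i ≠ 1) (hθ₂ : ∀ i j, G.Adj i j → θ i + θ j ≠ 1) {i : Fin n}
    (hνi : ν i = θ i * (1 - θ i) ^ (G.degree i - 1) /
      ∏ j ∈ G.neighborFinset i, (1 - θ i - θ j))
    (hdeg : G.degree i ≠ 0) {z : Fin n → Bool} (hz : ∀ j, G.Adj i j → z j = false) :
    treeWeight G θ (update z i true) = ν i * treeWeight G θ (update z i false) := by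
  obtain ⟨W, hW⟩ := exists_treeWeight_update G θ z i
  have hnbr : ∀ b, ∏ j ∈ G.neighborFinset i, edgeRatio θ i j b (z j)
      = ∏ j ∈ G.neighborFinset i, edgeRatio θ i j b false := fun b =>
    prod_congr rfl fun j hj => by rw [hz j ((mem_neighborFinset ..).1 hj)]
  obtain ⟨j, hj⟩ : (G.neighborFinset i).Nonempty :=
    card_pos.1 (by rw [card_neighborFinset_eq_degree]; omega)
  have hrate := mul_prod_edgeRatio_false_false ⟨j, hj⟩ (hθ₁ i j ((mem_neighborFinset ..).1 hj))
    fun j hj => hθ₂ i j ((mem_neighborFinset ..).1 hj)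
  rw [hW, hW, hnbr, hnbr, hνi, ← card_neighborFinset_eq_degree]
  simp only [siteWeight, if_true, Bool.false_eq_true, if_false]
  rw [← hrate]
  ring

variable {G : SimpleGraph (Fin n)} [DecidableRel G.Adj] {θ ν : Fin n → ℝ}

lemma treeWeight_eq_hcWeight_mul (hθ₁ : ∀ i j, G.Adj i j → θ i ≠ 1)
    (hθ₂ : ∀ i j, G.Adj i j → θ i + θ j ≠ 1)
    (hν : ∀ i, ν i = θ i * (1 - θ i) ^ (G.degree i - 1) /
      ∏ j ∈ G.neighborFinset i, (1 - θ i - θ j))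
    (hdeg : ∀ i, G.degree i ≠ 0) {z : Fin n → Bool} (hz : hcIndep G.Adj z) :
    treeWeight G θ z = hcWeight ν z * treeWeight G θ fun _ => false := by
  suffices key : ∀ s : Finset (Fin n), hcIndep G.Adj (fun v => decide (v ∈ s)) →
      treeWeight G θ (fun v => decide (v ∈ s))
        = hcWeight ν (fun v => decide (v ∈ s)) * treeWeight G θ fun _ => false by
    have hzs : z = fun v => decide (v ∈ univ.filter (z · = true)) := by
      ext v
      simp
    rw [hzs] at hz ⊢
    exact key _ hz
  intro s
  induction s using Finset.induction_on with
  | empty => simp [hcWeight]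
  | insert a s ha ih =>
    intro hins
    have hs : (fun v => decide (v ∈ s)) = update (fun v => decide (v ∈ s)) a false := by
      simp [ha]
    have hins_eq : (fun v => decide (v ∈ insert a s))
        = update (fun v => decide (v ∈ s)) a true := by
      ext v
      by_cases hv : v = a <;> simp [hv]
    have hs_indep : hcIndep G.Adj (fun v => decide (v ∈ s)) := fun i j hij ⟨hi, hj⟩ =>
      hins i j hij ⟨decide_eq_true (mem_insert_of_mem (of_decide_eq_true hi)),
        decide_eq_true (mem_insert_of_mem (of_decide_eq_true hj))⟩
    have hnbr : ∀ j, G.Adj a j → decide (j ∈ s) = false := fun j hj => decide_eq_false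
      fun hjs => hins a j hj ⟨decide_eq_true (mem_insert_self a s),
        decide_eq_true (mem_insert_of_mem hjs)⟩
    rw [hins_eq, treeWeight_update_true hθ₁ hθ₂ (hν a) (hdeg a) hnbr, hcWeight_update_true,
      ← hs, ih hs_indep]
    ring

lemma ite_hcIndep_mul_treeWeight (hθ₁ : ∀ i j, G.Adj i j → θ i ≠ 1)
    (hθ₂ : ∀ i j, G.Adj i j → θ i + θ j ≠ 1)
    (hν : ∀ i, ν i = θ i * (1 - θ i) ^ (G.degree i - 1) /
      ∏ j ∈ G.neighborFinset i, (1 - θ i - θ j))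
    (hdeg : ∀ i, G.degree i ≠ 0) (z : Fin n → Bool) :
    (if hcIndep G.Adj z then hcWeight ν z else 0) * treeWeight G θ (fun _ => false)
      = treeWeight G θ z := by
  split_ifs with hz
  · exact (treeWeight_eq_hcWeight_mul hθ₁ hθ₂ hν hdeg hz).symm
  · rw [zero_mul, treeWeight_eq_zero_of_not_hcIndep θ hz]

end HardCore

/-- tree conflict graph, marginals match targets under the tree formula. -/
theorem stmt2 (n : ℕ) (hn : 2 ≤ n) (G : SimpleGraph (Fin n)) [DecidableRel G.Adj]
    (hG : G.IsTree) (θ : Fin n → ℝ) (hθpos : ∀ i, 0 < θ i)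
    (hθ : ∀ i j, G.Adj i j → θ i + θ j < 1) (ν : Fin n → ℝ)
    (hν : ∀ i, ν i = θ i * (1 - θ i) ^ (G.degree i - 1) /
      ∏ j ∈ G.neighborFinset i, (1 - θ i - θ j)) :
    ∀ i, hcMarginal n G.Adj ν i = θ i := by
  intro i
  have : Nontrivial (Fin n) := Fin.nontrivial_iff_two_le.2 hn
  have hdeg : ∀ v, G.degree v ≠ 0 := fun v =>
    (hG.connected.preconnected.degree_pos_of_nontrivial v).ne'
  have hθ₁ : ∀ i j, G.Adj i j → θ i ≠ 1 := fun i j h =>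
    (by linarith [hθ i j h, hθpos j] : θ i < 1).ne
  have hθ₂ : ∀ i j, G.Adj i j → θ i + θ j ≠ 1 := fun i j h => (hθ i j h).ne
  have hmarg := hG.isAcyclic.sum_treeWeight_mul hθ₁ i
  have hZ : hcZ n G.Adj ν * treeWeight G θ (fun _ => false) = 1 := by
    rw [hcZ, sum_mul, sum_congr rfl fun z _ => ite_hcIndep_mul_treeWeight hθ₁ hθ₂ hν hdeg z]
    simpa [siteWeight] using hmarg fun _ => 1
  have hN : (∑ z, if hcIndep G.Adj z ∧ z i = true then hcWeight ν z else 0)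
      * treeWeight G θ (fun _ => false) = θ i := by
    rw [sum_mul]
    convert hmarg (fun b => if b then 1 else 0) using 1
    · refine sum_congr rfl fun z _ => ?_
      rw [← ite_hcIndep_mul_treeWeight hθ₁ hθ₂ hν hdeg z]
      by_cases hzi : z i <;> simp [hzi]
    · simp [siteWeight]
  rw [hcMarginal, ← mul_div_mul_right _ _ (right_ne_zero_of_mul_eq_one hZ), hN, hZ, div_one]
end

section
/- Consider a path graph on n vertices with interference range β (so i and j are adjacent iff 0 < |i−j| ≤ β). Let θ_1,...,θ_n be positive with θ_i + θ_{i+1} + ... + θ_{i+β} < 1 for all 1 ≤ i ≤ n−β. Define ν_i = θ_i · (∏_{j=max(i,β+1)}^{min(i+β,n)−1} (1−(θ_{j−β+1}+...+θ_j))) / (∏_{j=max(i,β+1)}^{min(i+β,n)} (1−(θ_{j−β}+...+θ_j))). Then the normalizing constant Z_n of the hard-core model with rates ν_i equals (∏_{j=β+1}^{n−1} (1−(θ_{j−β+1}+...+θ_j))) / (∏_{j=β+1}^{n} (1−(θ_{j−β}+...+θ_j))), provided n > β. -/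
open scoped Classical
open Finset

/-- prefix partition function -/
noncomputable def Spart (n β : ℕ) (ν : Fin n → ℝ) (m : ℕ) : ℝ :=
  ∑ z : Fin n → Bool,
    if (hcIndep (fun a b : Fin n => a ≠ b ∧ a.val ≤ b.val + β ∧ b.val ≤ a.val + β) z
        ∧ ∀ i : Fin n, m ≤ i.val → z i = false) then hcWeight ν z else 0

lemma Spart_top (n β : ℕ) (ν : Fin n → ℝ) :
    Spart n β ν n = hcZ n (fun a b : Fin n => a ≠ b ∧ a.val ≤ b.val + β ∧ b.val ≤ a.val + β) ν := by
  unfold Spart hcZ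
  refine Finset.sum_congr rfl fun z _ => ?_
  have : (∀ i : Fin n, n ≤ i.val → z i = false) := fun i hi => absurd hi (by omega)
  simp [this]

lemma Spart_zero (n β : ℕ) (ν : Fin n → ℝ) : Spart n β ν 0 = 1 := by
  unfold Spart
  have h : ∀ z : Fin n → Bool,
      (if (hcIndep (fun a b : Fin n => a ≠ b ∧ a.val ≤ b.val + β ∧ b.val ≤ a.val + β) z
        ∧ ∀ i : Fin n, 0 ≤ i.val → z i = false) then hcWeight ν z else 0)
      = if z = (fun _ => false) then 1 else 0 := by
    intro z
    by_cases hz : z = (fun _ => false)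
    · subst hz
      rw [if_pos, if_pos rfl]
      · unfold hcWeight; simp
      · constructor
        · intro i j _ h; simp at h
        · intro i _; rfl
    · rw [if_neg, if_neg hz]
      rintro ⟨-, h⟩
      exact hz (funext fun i => h i (Nat.zero_le _))
  rw [Finset.sum_congr rfl fun z _ => h z]
  simp

lemma Spart_rec (n β : ℕ) (ν : Fin n → ℝ) (m : ℕ) (hm : m < n) :
    Spart n β ν (m + 1) = Spart n β ν m + ν ⟨m, hm⟩ * Spart n β ν (m - β) := by
  classical
  set A : Fin n → Fin n → Prop := fun a b => a ≠ b ∧ a.val ≤ b.val + β ∧ b.val ≤ a.val + β with hA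
  set k : Fin n := ⟨m, hm⟩ with hk
  set f : (Fin n → Bool) → ℝ := fun z =>
    if (hcIndep A z ∧ ∀ i : Fin n, m + 1 ≤ i.val → z i = false) then hcWeight ν z else 0 with hf
  have split : ∀ z, f z = (if z k = false then f z else 0) + (if z k = true then f z else 0) := by
    intro z; cases hz : z k <;> simp [hz]
  have step1 : Spart n β ν (m+1)
      = (∑ z : Fin n → Bool, if z k = false then f z else 0)
        + (∑ z : Fin n → Bool, if z k = true then f z else 0) := by
    rw [← Finset.sum_add_distrib]
    exact Finset.sum_congr rfl fun z _ => split z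
  -- first sum is Spart m
  have first : (∑ z : Fin n → Bool, if z k = false then f z else 0) = Spart n β ν m := by
    unfold Spart
    refine Finset.sum_congr rfl fun z _ => ?_
    cases hz : z k
    · rw [if_pos rfl, hf]
      refine if_congr ?_ rfl rfl
      constructor
      · rintro ⟨h1, h2⟩
        refine ⟨h1, fun i hi => ?_⟩
        rcases eq_or_lt_of_le hi with h | h
        · have : i = k := Fin.ext h.symm
          rw [this, hz]
        · exact h2 i h
      · rintro ⟨h1, h2⟩
        exact ⟨h1, fun i hi => h2 i (by omega)⟩
    · rw [if_neg (by simp), if_neg]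
      rintro ⟨-, h2⟩
      have := h2 k (le_refl m)
      rw [hz] at this; exact absurd this (by simp)
  -- second sum
  have second : (∑ z : Fin n → Bool, if z k = true then f z else 0)
      = ν k * Spart n β ν (m - β) := by
    set σ : (Fin n → Bool) → (Fin n → Bool) := fun z => Function.update z k (!(z k)) with hσ
    have hinv : Function.Involutive σ := by
      intro z
      funext i
      by_cases hi : i = k
      · subst hi; simp [hσ]
      · simp [hσ, Function.update_of_ne hi]
    have hbij := hinv.bijective
    have reindex : (∑ z : Fin n → Bool, if z k = true then f z else 0)
        = ∑ z : Fin n → Bool, if σ z k = true then f (σ z) else 0 :=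
      (hbij.sum_comp (fun z => if z k = true then f z else 0)).symm
    rw [reindex, Spart, Finset.mul_sum]
    refine Finset.sum_congr rfl fun z _ => ?_
    have hσk : σ z k = !(z k) := by simp [hσ]
    cases hz : z k
    · -- z k = false : σ z = update z k true
      have hσz : σ z = Function.update z k true := by
        show Function.update z k (!z k) = _
        rw [hz]; rfl
      rw [hσk, hz]
      rw [if_pos (by simp), hσz]
      -- weight identity
      have hw : hcWeight ν (Function.update z k true) = ν k * hcWeight ν z := by
        unfold hcWeight
        rw [Fintype.prod_eq_mul_prod_compl k, Fintype.prod_eq_mul_prod_compl k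
          (fun i => if z i then ν i else 1)]
        rw [Function.update_self, if_pos rfl, hz, if_neg (by simp), one_mul]
        congr 1
        refine Finset.prod_congr rfl fun i hi => ?_
        have : i ≠ k := by simpa using hi
        rw [Function.update_of_ne this]
      -- condition identity
      have hcond : (hcIndep A (Function.update z k true)
            ∧ ∀ i : Fin n, m + 1 ≤ i.val → Function.update z k true i = false)
          ↔ (hcIndep A z ∧ ∀ i : Fin n, m - β ≤ i.val → z i = false) := by
        constructor
        · rintro ⟨h1, h2⟩
          constructor
          · intro i j hij ⟨hi, hj⟩
            have hik : i ≠ k := by rintro rfl; rw [hz] at hi; exact absurd hi (by simp)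
            have hjk : j ≠ k := by rintro rfl; rw [hz] at hj; exact absurd hj (by simp)
            exact h1 i j hij ⟨by rw [Function.update_of_ne hik]; exact hi,
              by rw [Function.update_of_ne hjk]; exact hj⟩
          · intro i hi
            by_cases hik : i = k
            · rw [hik, hz]
            · by_cases him : m + 1 ≤ i.val
              · have := h2 i him
                rwa [Function.update_of_ne hik] at this
              · have hadj : A i k := by
                  refine ⟨fun h => hik (by exact_mod_cast h), ?_, ?_⟩
                  · simp only [hk]; omega
                  · simp only [hk]; omega
                have := h1 i k hadj
                have hki : Function.update z k true k = true := Function.update_self _ _ _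
                by_contra hzi
                have hzi' : z i = true := by
                  cases hzi2 : z i
                  · exact absurd hzi2 hzi
                  · rfl
                exact this ⟨by rw [Function.update_of_ne hik]; exact hzi', hki⟩
        · rintro ⟨h1, h2⟩
          constructor
          · intro i j hij ⟨hi, hj⟩
            rcases hij with ⟨hne, hij1, hij2⟩
            by_cases hik : i = k
            · subst hik
              have hjk : j ≠ k := fun h => hne h.symm
              have hzj : z j = true := by rw [← Function.update_of_ne hjk true z]; exact hj
              have : z j = false := h2 j (by simp only [hk] at hij1 ⊢; omega)
              rw [this] at hzj; exact absurd hzj (by simp)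
            · by_cases hjk : j = k
              · subst hjk
                have hzi : z i = true := by rw [← Function.update_of_ne hik true z]; exact hi
                have : z i = false := h2 i (by simp only [hk] at hij2 ⊢; omega)
                rw [this] at hzi; exact absurd hzi (by simp)
              · exact h1 i j ⟨hne, hij1, hij2⟩
                  ⟨by rw [← Function.update_of_ne hik true z]; exact hi,
                   by rw [← Function.update_of_ne hjk true z]; exact hj⟩
          · intro i hi
            have hik : i ≠ k := by
              intro h; subst h; simp only [hk] at hi; omega
            rw [Function.update_of_ne hik]
            exact h2 i (by omega)
      simp only [hf]
      rw [hw]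
      by_cases hc : hcIndep A z ∧ ∀ i : Fin n, m - β ≤ i.val → z i = false
      · rw [if_pos (hcond.mpr hc), if_pos hc]
      · rw [if_neg (fun h => hc (hcond.mp h)), if_neg hc, mul_zero]
    · -- z k = true : both sides zero
      rw [hσk, hz]
      simp only [Bool.not_true]
      rw [if_neg (by simp)]
      rw [if_neg, mul_zero]
      rintro ⟨-, h2⟩
      have := h2 k (by simp only [hk]; omega)
      rw [hz] at this; exact absurd this (by simp)
  rw [step1, first, second]

lemma sum_Icc_bot (a b : ℕ) (h : a ≤ b) (θ : ℕ → ℝ) :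
    ∑ s ∈ Finset.Icc a b, θ s = θ a + ∑ s ∈ Finset.Icc (a+1) b, θ s := by
  rw [Finset.Icc_add_one_left_eq_Ioc, ← Finset.Ioc_insert_left h, Finset.sum_insert (by simp)]

lemma prod_merge (β m' t : ℕ) (f : ℕ → ℝ) (ht : m' ≤ t) :
    (∏ j ∈ Finset.Icc (β+1) m', f j) * (∏ j ∈ Finset.Icc (max (m'+1) (β+1)) t, f j)
      = ∏ j ∈ Finset.Icc (β+1) t, f j := by
  rcases le_or_gt β m' with h | h
  · rw [max_eq_left (by omega), Finset.Icc_add_one_left_eq_Ioc, Finset.Icc_add_one_left_eq_Ioc, Finset.Icc_add_one_left_eq_Ioc]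
    exact Finset.prod_Ioc_consecutive f h ht
  · rw [max_eq_right (by omega), Finset.Icc_eq_empty (by omega)]
    simp

section
variable (n β : ℕ) (θ : ℕ → ℝ)

lemma Gfac_pos (hθpos : ∀ i, 1 ≤ i → i ≤ n → 0 < θ i)
    (hθ : ∀ i, 1 ≤ i → i + β ≤ n → ∑ s ∈ Finset.Icc i (i + β), θ s < 1) :
    ∀ j, β+1 ≤ j → j ≤ n → 0 < 1 - ∑ s ∈ Finset.Icc (j-β) j, θ s := by
  intro j h1 h2
  have e : j - β + β = j := by omega
  have := hθ (j-β) (by omega) (by omega)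
  rw [e] at this
  linarith

lemma gfac_pos (hθpos : ∀ i, 1 ≤ i → i ≤ n → 0 < θ i)
    (hθ : ∀ i, 1 ≤ i → i + β ≤ n → ∑ s ∈ Finset.Icc i (i + β), θ s < 1) :
    ∀ j, β+1 ≤ j → j ≤ n → 0 < 1 - ∑ s ∈ Finset.Icc (j-β+1) j, θ s := by
  intro j h1 h2
  have hG := Gfac_pos n β θ hθpos hθ j h1 h2
  have hs := sum_Icc_bot (j-β) j (by omega) θ
  have hp := hθpos (j-β) (by omega) (by omega)
  rw [hs] at hG
  linarith

lemma Gprod_pos (hθpos : ∀ i, 1 ≤ i → i ≤ n → 0 < θ i)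
    (hθ : ∀ i, 1 ≤ i → i + β ≤ n → ∑ s ∈ Finset.Icc i (i + β), θ s < 1) :
    ∀ a t, β+1 ≤ a → t ≤ n → 0 < ∏ j ∈ Finset.Icc a t, (1 - ∑ s ∈ Finset.Icc (j-β) j, θ s) := by
  intro a t ha htn
  refine Finset.prod_pos fun j hj => ?_
  rw [Finset.mem_Icc] at hj
  exact Gfac_pos n β θ hθpos hθ j (by omega) (by omega)

end

lemma partA (n β : ℕ) (hβn : β < n) (θ : ℕ → ℝ) (ν : Fin n → ℝ)
    (hθpos : ∀ i, 1 ≤ i → i ≤ n → 0 < θ i)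
    (hθ : ∀ i, 1 ≤ i → i + β ≤ n → ∑ s ∈ Finset.Icc i (i + β), θ s < 1)
    (hν : ∀ k : Fin n, ν k =
      θ (k.val + 1) *
        (∏ j ∈ Finset.Icc (max (k.val + 1) (β + 1)) (min (k.val + 1 + β) n - 1),
          (1 - ∑ s ∈ Finset.Icc (j - β + 1) j, θ s)) /
        (∏ j ∈ Finset.Icc (max (k.val + 1) (β + 1)) (min (k.val + 1 + β) n),
          (1 - ∑ s ∈ Finset.Icc (j - β) j, θ s))) :
    ∀ m, m + β ≤ n → Spart n β ν m =
      (∏ j ∈ Finset.Icc (β+1) (m+β), (1 - ∑ s ∈ Finset.Icc (j-β+1) j, θ s)) /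
      (∏ j ∈ Finset.Icc (β+1) (m+β), (1 - ∑ s ∈ Finset.Icc (j-β) j, θ s)) := by
  intro m
  induction m using Nat.strong_induction_on with
  | _ m IH =>
    intro hmn
    rcases m with _ | m'
    · rw [Spart_zero, Nat.zero_add, Finset.Icc_eq_empty (by omega)]
      simp
    · have hm'n : m' < n := by omega
      rw [Spart_rec n β ν m' hm'n]
      -- IH at m'
      have IH1 := IH m' (by omega) (by omega)
      -- IH at m' - β
      have IH2 : Spart n β ν (m' - β) =
          (∏ j ∈ Finset.Icc (β+1) m', (1 - ∑ s ∈ Finset.Icc (j-β+1) j, θ s)) /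
          (∏ j ∈ Finset.Icc (β+1) m', (1 - ∑ s ∈ Finset.Icc (j-β) j, θ s)) := by
        rcases le_or_gt β m' with h | h
        · have := IH (m' - β) (by omega) (by omega)
          rwa [Nat.sub_add_cancel h] at this
        · rw [show m' - β = 0 by omega, Spart_zero, Finset.Icc_eq_empty (by omega)]
          simp
      have hk := hν ⟨m', hm'n⟩
      simp only [Fin.val_mk] at hk
      rw [min_eq_left (by omega : m' + 1 + β ≤ n)] at hk
      rw [show m' + 1 + β - 1 = m' + β by omega] at hk
      rw [IH1, IH2, hk]
      have merge_g : (∏ j ∈ Finset.Icc (β+1) m', (1 - ∑ s ∈ Finset.Icc (j-β+1) j, θ s))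
          * (∏ j ∈ Finset.Icc (max (m'+1) (β+1)) (m'+β), (1 - ∑ s ∈ Finset.Icc (j-β+1) j, θ s))
          = ∏ j ∈ Finset.Icc (β+1) (m'+β), (1 - ∑ s ∈ Finset.Icc (j-β+1) j, θ s) :=
        prod_merge β m' (m'+β) _ (by omega)
      have merge_G : (∏ j ∈ Finset.Icc (β+1) m', (1 - ∑ s ∈ Finset.Icc (j-β) j, θ s))
          * (∏ j ∈ Finset.Icc (max (m'+1) (β+1)) (m'+1+β), (1 - ∑ s ∈ Finset.Icc (j-β) j, θ s))
          = ∏ j ∈ Finset.Icc (β+1) (m'+1+β), (1 - ∑ s ∈ Finset.Icc (j-β) j, θ s) :=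
        prod_merge β m' (m'+1+β) _ (by omega)
      have split_g : (∏ j ∈ Finset.Icc (β+1) (m'+1+β), (1 - ∑ s ∈ Finset.Icc (j-β+1) j, θ s))
          = (∏ j ∈ Finset.Icc (β+1) (m'+β), (1 - ∑ s ∈ Finset.Icc (j-β+1) j, θ s))
            * (1 - ∑ s ∈ Finset.Icc ((m'+1+β)-β+1) (m'+1+β), θ s) := by
        rw [show m'+1+β = (m'+β)+1 by omega,
          Finset.prod_Icc_succ_top (by omega) (fun j => 1 - ∑ s ∈ Finset.Icc (j-β+1) j, θ s)]
      have split_G : (∏ j ∈ Finset.Icc (β+1) (m'+1+β), (1 - ∑ s ∈ Finset.Icc (j-β) j, θ s))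
          = (∏ j ∈ Finset.Icc (β+1) (m'+β), (1 - ∑ s ∈ Finset.Icc (j-β) j, θ s))
            * (1 - ∑ s ∈ Finset.Icc ((m'+1+β)-β) (m'+1+β), θ s) := by
        rw [show m'+1+β = (m'+β)+1 by omega,
          Finset.prod_Icc_succ_top (by omega) (fun j => 1 - ∑ s ∈ Finset.Icc (j-β) j, θ s)]
      have key : (1 - ∑ s ∈ Finset.Icc ((m'+1+β)-β+1) (m'+1+β), θ s)
          = (1 - ∑ s ∈ Finset.Icc ((m'+1+β)-β) (m'+1+β), θ s) + θ (m'+1) := by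
        rw [show (m'+1+β)-β = m'+1 by omega,
          sum_Icc_bot (m'+1) (m'+1+β) (by omega) θ]
        ring
      -- nonzero facts
      have hqG : (∏ j ∈ Finset.Icc (β+1) m', (1 - ∑ s ∈ Finset.Icc (j-β) j, θ s)) ≠ 0 :=
        ne_of_gt (Gprod_pos n β θ hθpos hθ (β+1) m' le_rfl (by omega))
      have hb : (∏ j ∈ Finset.Icc (β+1) (m'+β), (1 - ∑ s ∈ Finset.Icc (j-β) j, θ s)) ≠ 0 :=
        ne_of_gt (Gprod_pos n β θ hθpos hθ (β+1) (m'+β) le_rfl (by omega))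
      have hd : (∏ j ∈ Finset.Icc (max (m'+1) (β+1)) (m'+1+β),
          (1 - ∑ s ∈ Finset.Icc (j-β) j, θ s)) ≠ 0 :=
        ne_of_gt (Gprod_pos n β θ hθpos hθ _ (m'+1+β) (le_max_right _ _) (by omega))
      have hGT : (1 - ∑ s ∈ Finset.Icc ((m'+1+β)-β) (m'+1+β), θ s) ≠ 0 :=
        ne_of_gt (Gfac_pos n β θ hθpos hθ (m'+1+β) (by omega) (by omega))
      have hdq : (∏ j ∈ Finset.Icc (max (m'+1) (β+1)) (m'+1+β), (1 - ∑ s ∈ Finset.Icc (j-β) j, θ s))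
            * (∏ j ∈ Finset.Icc (β+1) m', (1 - ∑ s ∈ Finset.Icc (j-β) j, θ s))
          = (∏ j ∈ Finset.Icc (β+1) (m'+β), (1 - ∑ s ∈ Finset.Icc (j-β) j, θ s))
            * (1 - ∑ s ∈ Finset.Icc ((m'+1+β)-β) (m'+1+β), θ s) := by
        rw [mul_comm, merge_G, split_G]
      rw [split_g, split_G]
      rw [div_mul_div_comm, hdq]
      rw [show (θ (m'+1) * ∏ j ∈ Finset.Icc (max (m'+1) (β+1)) (m'+β),
            (1 - ∑ s ∈ Finset.Icc (j-β+1) j, θ s))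
          * (∏ j ∈ Finset.Icc (β+1) m', (1 - ∑ s ∈ Finset.Icc (j-β+1) j, θ s))
          = θ (m'+1) * ∏ j ∈ Finset.Icc (β+1) (m'+β), (1 - ∑ s ∈ Finset.Icc (j-β+1) j, θ s) by
            rw [← merge_g]; ring]
      rw [key]
      set a := ∏ j ∈ Finset.Icc (β+1) (m'+β), (1 - ∑ s ∈ Finset.Icc (j-β+1) j, θ s) with ha
      set b := ∏ j ∈ Finset.Icc (β+1) (m'+β), (1 - ∑ s ∈ Finset.Icc (j-β) j, θ s) with hbb
      set T := (1 - ∑ s ∈ Finset.Icc ((m'+1+β)-β) (m'+1+β), θ s) with hT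
      field_simp

lemma partB (n β : ℕ) (hβn : β < n) (θ : ℕ → ℝ) (ν : Fin n → ℝ)
    (hθpos : ∀ i, 1 ≤ i → i ≤ n → 0 < θ i)
    (hθ : ∀ i, 1 ≤ i → i + β ≤ n → ∑ s ∈ Finset.Icc i (i + β), θ s < 1)
    (hν : ∀ k : Fin n, ν k =
      θ (k.val + 1) *
        (∏ j ∈ Finset.Icc (max (k.val + 1) (β + 1)) (min (k.val + 1 + β) n - 1),
          (1 - ∑ s ∈ Finset.Icc (j - β + 1) j, θ s)) /
        (∏ j ∈ Finset.Icc (max (k.val + 1) (β + 1)) (min (k.val + 1 + β) n),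
          (1 - ∑ s ∈ Finset.Icc (j - β) j, θ s))) :
    ∀ m, n - β ≤ m → m ≤ n → Spart n β ν m =
      (1 - ∑ s ∈ Finset.Icc (m+1) n, θ s) *
      ((∏ j ∈ Finset.Icc (β+1) (n-1), (1 - ∑ s ∈ Finset.Icc (j-β+1) j, θ s)) /
       (∏ j ∈ Finset.Icc (β+1) n, (1 - ∑ s ∈ Finset.Icc (j-β) j, θ s))) := by
  intro m hm
  induction m, hm using Nat.le_induction with
  | base =>
    intro _
    have hA := partA n β hβn θ ν hθpos hθ hν (n - β) (by omega)
    rw [Nat.sub_add_cancel (by omega : β ≤ n)] at hA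
    rw [hA]
    have split_g : (∏ j ∈ Finset.Icc (β+1) n, (1 - ∑ s ∈ Finset.Icc (j-β+1) j, θ s))
        = (∏ j ∈ Finset.Icc (β+1) (n-1), (1 - ∑ s ∈ Finset.Icc (j-β+1) j, θ s))
          * (1 - ∑ s ∈ Finset.Icc (n-β+1) n, θ s) := by
      rw [show n = (n-1)+1 by omega]
      rw [Finset.prod_Icc_succ_top (by omega) (fun j => 1 - ∑ s ∈ Finset.Icc (j-β+1) j, θ s)]
      rw [show (n-1)+1 = n by omega]
    rw [split_g]
    ring
  | succ m hm IH =>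
    intro hm1n
    have hmn : m < n := by omega
    have IH' := IH (by omega)
    rw [Spart_rec n β ν m hmn, IH']
    have hS2 : Spart n β ν (m - β) =
        (∏ j ∈ Finset.Icc (β+1) m, (1 - ∑ s ∈ Finset.Icc (j-β+1) j, θ s)) /
        (∏ j ∈ Finset.Icc (β+1) m, (1 - ∑ s ∈ Finset.Icc (j-β) j, θ s)) := by
      rcases le_or_gt β m with h | h
      · have := partA n β hβn θ ν hθpos hθ hν (m - β) (by omega)
        rwa [Nat.sub_add_cancel h] at this
      · rw [show m - β = 0 by omega, Spart_zero, Finset.Icc_eq_empty (by omega)]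
        simp
    have hk := hν ⟨m, hmn⟩
    simp only [Fin.val_mk] at hk
    rw [min_eq_right (by omega : n ≤ m + 1 + β)] at hk
    rw [hk, hS2]
    have merge_g : (∏ j ∈ Finset.Icc (β+1) m, (1 - ∑ s ∈ Finset.Icc (j-β+1) j, θ s))
        * (∏ j ∈ Finset.Icc (max (m+1) (β+1)) (n-1), (1 - ∑ s ∈ Finset.Icc (j-β+1) j, θ s))
        = ∏ j ∈ Finset.Icc (β+1) (n-1), (1 - ∑ s ∈ Finset.Icc (j-β+1) j, θ s) :=
      prod_merge β m (n-1) _ (by omega)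
    have merge_G : (∏ j ∈ Finset.Icc (β+1) m, (1 - ∑ s ∈ Finset.Icc (j-β) j, θ s))
        * (∏ j ∈ Finset.Icc (max (m+1) (β+1)) n, (1 - ∑ s ∈ Finset.Icc (j-β) j, θ s))
        = ∏ j ∈ Finset.Icc (β+1) n, (1 - ∑ s ∈ Finset.Icc (j-β) j, θ s) :=
      prod_merge β m n _ (by omega)
    rw [div_mul_div_comm]
    rw [show (θ (m+1) * ∏ j ∈ Finset.Icc (max (m+1) (β+1)) (n-1),
          (1 - ∑ s ∈ Finset.Icc (j-β+1) j, θ s))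
        * (∏ j ∈ Finset.Icc (β+1) m, (1 - ∑ s ∈ Finset.Icc (j-β+1) j, θ s))
        = θ (m+1) * ∏ j ∈ Finset.Icc (β+1) (n-1), (1 - ∑ s ∈ Finset.Icc (j-β+1) j, θ s) by
          rw [← merge_g]; ring]
    rw [show (∏ j ∈ Finset.Icc (max (m+1) (β+1)) n, (1 - ∑ s ∈ Finset.Icc (j-β) j, θ s))
        * (∏ j ∈ Finset.Icc (β+1) m, (1 - ∑ s ∈ Finset.Icc (j-β) j, θ s))
        = ∏ j ∈ Finset.Icc (β+1) n, (1 - ∑ s ∈ Finset.Icc (j-β) j, θ s) by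
          rw [← merge_G]; ring]
    rw [sum_Icc_bot (m+1) n (by omega) θ]
    set C1 := ∏ j ∈ Finset.Icc (β+1) (n-1), (1 - ∑ s ∈ Finset.Icc (j-β+1) j, θ s)
    set C2 := ∏ j ∈ Finset.Icc (β+1) n, (1 - ∑ s ∈ Finset.Icc (j-β) j, θ s)
    ring

/-- line network with interference range β (1-based vertices i = 1,…,n,
vertex i corresponding to `k : Fin n` with `k.val + 1 = i`; i and j adjacent iff
`0 < |i−j| ≤ β`): closed form for the normalizing constant, provided n > β. -/
theorem stmt4 (n β : ℕ) (hβn : β < n) (θ : ℕ → ℝ) (ν : Fin n → ℝ)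
    (hθpos : ∀ i, 1 ≤ i → i ≤ n → 0 < θ i)
    (hθ : ∀ i, 1 ≤ i → i + β ≤ n → ∑ s ∈ Finset.Icc i (i + β), θ s < 1)
    (hν : ∀ k : Fin n, ν k =
      θ (k.val + 1) *
        (∏ j ∈ Finset.Icc (max (k.val + 1) (β + 1)) (min (k.val + 1 + β) n - 1),
          (1 - ∑ s ∈ Finset.Icc (j - β + 1) j, θ s)) /
        (∏ j ∈ Finset.Icc (max (k.val + 1) (β + 1)) (min (k.val + 1 + β) n),
          (1 - ∑ s ∈ Finset.Icc (j - β) j, θ s))) :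
    hcZ n (fun a b : Fin n => a ≠ b ∧ a.val ≤ b.val + β ∧ b.val ≤ a.val + β) ν =
      (∏ j ∈ Finset.Icc (β + 1) (n - 1), (1 - ∑ s ∈ Finset.Icc (j - β + 1) j, θ s)) /
        (∏ j ∈ Finset.Icc (β + 1) n, (1 - ∑ s ∈ Finset.Icc (j - β) j, θ s)) := by
  rw [← Spart_top n β ν]
  rw [partB n β hβn θ ν hθpos hθ hν n (by omega) le_rfl]
  rw [Finset.Icc_eq_empty (by omega)]
  simp
end

section
/- Consider a path graph on n vertices with interference range β and positive θ_1,...,θ_n satisfying θ_i + ... + θ_{i+β} < 1 for all 1 ≤ i ≤ n−β. With the back-off rates ν_i = θ_i · (∏_{j=max(i,β+1)}^{min(i+β,n)−1} (1−(θ_{j−β+1}+...+θ_j))) / (∏_{j=max(i,β+1)}^{min(i+β,n)} (1−(θ_{j−β}+...+θ_j))), the marginal probability under π(z) ∝ ∏_i ν_i^{z_i} that node i is active equals θ_i, for every i. -/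
open scoped Classical
open Finset

def lineA (n β : ℕ) : Fin n → Fin n → Prop :=
  fun a b => a ≠ b ∧ a.val ≤ b.val + β ∧ b.val ≤ a.val + β
noncomputable def Pf (n β : ℕ) (ν : Fin n → ℝ) (m : ℕ) : ℝ :=
  ∑ z : Fin n → Bool,
    if hcIndep (lineA n β) z ∧ (∀ j : Fin n, m ≤ j.val → z j = false) then hcWeight ν z else 0
noncomputable def Qf (n β : ℕ) (ν : Fin n → ℝ) (m : ℕ) : ℝ :=
  ∑ z : Fin n → Bool,
    if hcIndep (lineA n β) z ∧ (∀ j : Fin n, j.val < m → z j = false) then hcWeight ν z else 0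

variable {n β : ℕ} {ν : Fin n → ℝ}

lemma weight_update {z : Fin n → Bool} {i : Fin n} (h : z i = false) :
    hcWeight ν (Function.update z i true) = ν i * hcWeight ν z := by
  unfold hcWeight
  rw [← Finset.mul_prod_erase Finset.univ
      (fun j => if Function.update z i true j then ν j else 1) (Finset.mem_univ i),
    ← Finset.mul_prod_erase Finset.univ (fun j => if z j then ν j else 1) (Finset.mem_univ i), h]
  simp only [Function.update_self, if_true, Bool.false_eq_true, if_false, one_mul]
  rw [Finset.prod_congr rfl]
  intro j hj
  rw [Function.update_of_ne (Finset.ne_of_mem_erase hj)]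

lemma indep_mono {z y : Fin n → Bool} (hz : hcIndep (lineA n β) z)
    (h : ∀ j, y j = true → z j = true) : hcIndep (lineA n β) y := by
  intro a b hab hc
  exact hz a b hab ⟨h a hc.1, h b hc.2⟩

lemma update_mono {z : Fin n → Bool} {i : Fin n} (j : Fin n) (hj : z j = true) :
    Function.update z i true j = true := by
  by_cases h : j = i
  · subst h; simp
  · rwa [Function.update_of_ne h]

lemma sum_flip (i : Fin n) (f : (Fin n → Bool) → ℝ) :
    (∑ z : Fin n → Bool, if z i = true then f z else 0)
      = ∑ z : Fin n → Bool, if z i = false then f (Function.update z i true) else 0 := by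
  have hinv : Function.Involutive (fun z : Fin n → Bool => Function.update z i (!z i)) := by
    intro z; funext t
    by_cases ht : t = i
    · subst ht; simp
    · simp [Function.update_of_ne ht]
  rw [← Function.Bijective.sum_comp (hinv.bijective) (fun z => if z i = true then f z else 0)]
  apply Finset.sum_congr rfl
  intro z _
  by_cases h : z i = true
  · simp [h]
  · simp only [Bool.not_eq_true] at h
    simp [h]

lemma sum_split (i : Fin n) (f : (Fin n → Bool) → ℝ) :
    (∑ z : Fin n → Bool, f z)
      = (∑ z : Fin n → Bool, if z i = true then f z else 0)
        + ∑ z : Fin n → Bool, if z i = false then f z else 0 := by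
  rw [← Finset.sum_add_distrib]
  apply Finset.sum_congr rfl
  intro z _
  by_cases h : z i = true
  · simp [h]
  · simp only [Bool.not_eq_true] at h; simp [h]


lemma hcZ_eq_Pf {n β : ℕ} {ν : Fin n → ℝ} : hcZ n (lineA n β) ν = Pf n β ν n := by
  unfold hcZ Pf
  apply Finset.sum_congr rfl
  intro z _
  congr 1
  have : ∀ j : Fin n, n ≤ j.val → z j = false := fun j hj => absurd j.isLt (by omega)
  simp [this]

lemma hcZ_eq_Qf {n β : ℕ} {ν : Fin n → ℝ} : hcZ n (lineA n β) ν = Qf n β ν 0 := by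
  unfold hcZ Qf
  apply Finset.sum_congr rfl
  intro z _
  congr 1
  simp

lemma Pf_zero {n β : ℕ} {ν : Fin n → ℝ} : Pf n β ν 0 = 1 := by
  unfold Pf
  rw [Finset.sum_eq_single_of_mem (fun _ => false) (Finset.mem_univ _)]
  · rw [if_pos]
    · simp [hcWeight]
    · exact ⟨fun a b _ h => by simp at h, fun j _ => rfl⟩
  · intro z _ hz
    rw [if_neg]
    rintro ⟨-, h2⟩
    exact hz (funext fun j => h2 j (Nat.zero_le _))

lemma Qf_top {n β : ℕ} {ν : Fin n → ℝ} {m : ℕ} (h : n ≤ m) : Qf n β ν m = 1 := by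
  unfold Qf
  rw [Finset.sum_eq_single_of_mem (fun _ => false) (Finset.mem_univ _)]
  · rw [if_pos]
    · simp [hcWeight]
    · exact ⟨fun a b _ hc => by simp at hc, fun j _ => rfl⟩
  · intro z _ hz
    rw [if_neg]
    rintro ⟨-, h2⟩
    exact hz (funext fun j => h2 j (by omega))


lemma Pf_succ {m : ℕ} (hm : m < n) :
    Pf n β ν (m + 1) = Pf n β ν m + ν ⟨m, hm⟩ * Pf n β ν (m - β) := by
  set i : Fin n := ⟨m, hm⟩ with hi
  have him : i.val = m := rfl
  have key := sum_split i (fun z : Fin n → Bool =>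
    if hcIndep (lineA n β) z ∧ (∀ j : Fin n, m + 1 ≤ j.val → z j = false)
    then hcWeight ν z else 0)
  rw [Pf, key, sum_flip]
  have h1 : (∑ z : Fin n → Bool, if z i = false then
      (if hcIndep (lineA n β) (Function.update z i true)
          ∧ (∀ j : Fin n, m + 1 ≤ j.val → Function.update z i true j = false)
        then hcWeight ν (Function.update z i true) else 0) else 0)
      = ν i * Pf n β ν (m - β) := by
    rw [Pf, Finset.mul_sum]
    apply Finset.sum_congr rfl
    intro z _
    by_cases hzi : z i = false
    · rw [if_pos hzi]
      have hequiv : (hcIndep (lineA n β) (Function.update z i true)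
          ∧ (∀ j : Fin n, m + 1 ≤ j.val → Function.update z i true j = false))
          ↔ (hcIndep (lineA n β) z ∧ (∀ j : Fin n, m - β ≤ j.val → z j = false)) := by
        constructor
        · rintro ⟨h1, h2⟩
          refine ⟨indep_mono h1 (fun j hj => update_mono j hj), ?_⟩
          intro j hj
          by_cases hji : j = i
          · subst hji; exact hzi
          · by_cases hj2 : m + 1 ≤ j.val
            · have := h2 j hj2
              rwa [Function.update_of_ne hji] at this
            · have hjm : j.val ≠ m := fun h => hji (Fin.ext (by rw [h, him]))
              have hadj : lineA n β j i := ⟨hji, by omega, by omega⟩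
              have := h1 j i hadj
              have hupd : Function.update z i true i = true := by simp
              have hj3 : Function.update z i true j = false := by
                by_contra hc
                simp only [Bool.not_eq_false] at hc
                exact this ⟨hc, hupd⟩
              rwa [Function.update_of_ne hji] at hj3
        · rintro ⟨h1, h2⟩
          constructor
          · rintro a b ⟨hne, hd1, hd2⟩ ⟨hca, hcb⟩
            by_cases ha : a = i
            · have hbne : b ≠ i := fun h => hne (ha.trans h.symm)
              have ham : a.val = m := by rw [ha, him]
              have hz : z b = false := h2 b (by omega)
              rw [Function.update_of_ne hbne, hz] at hcb
              exact Bool.false_ne_true hcb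
            · by_cases hb : b = i
              · have hbm : b.val = m := by rw [hb, him]
                have hz : z a = false := h2 a (by omega)
                rw [Function.update_of_ne ha, hz] at hca
                exact Bool.false_ne_true hca
              · rw [Function.update_of_ne ha] at hca
                rw [Function.update_of_ne hb] at hcb
                exact h1 a b ⟨hne, hd1, hd2⟩ ⟨hca, hcb⟩
          · intro j hj
            have hji : j ≠ i := by
              intro h; subst h; omega
            rw [Function.update_of_ne hji]
            exact h2 j (by omega)
      by_cases hc : hcIndep (lineA n β) z ∧ (∀ j : Fin n, m - β ≤ j.val → z j = false)
      · rw [if_pos (hequiv.mpr hc), if_pos hc, weight_update hzi]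
      · rw [if_neg (fun h => hc (hequiv.mp h)), if_neg hc, mul_zero]
    · rw [if_neg hzi]
      rw [if_neg, mul_zero]
      rintro ⟨-, h2⟩
      exact hzi (h2 i (him ▸ Nat.sub_le m β))
  rw [h1, add_comm]
  congr 1
  apply Finset.sum_congr rfl
  intro z _
  by_cases hzi : z i = false
  · rw [if_pos hzi]
    congr 1
    apply propext
    constructor
    · rintro ⟨h1, h2⟩
      refine ⟨h1, fun j hj => ?_⟩
      by_cases hji : j = i
      · subst hji; exact hzi
      · have : j.val ≠ m := fun h => hji (Fin.ext (by rw [h, him]))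
        exact h2 j (by omega)
    · rintro ⟨h1, h2⟩
      exact ⟨h1, fun j hj => h2 j (by omega)⟩
  · rw [if_neg hzi, if_neg]
    simp only [Bool.not_eq_false] at hzi
    rintro ⟨-, h2⟩
    have := h2 i (le_of_eq him.symm)
    rw [hzi] at this
    exact absurd this (by simp)

lemma Qf_rec {m : ℕ} (hm : m < n) :
    Qf n β ν m = Qf n β ν (m + 1) + ν ⟨m, hm⟩ * Qf n β ν (m + 1 + β) := by
  set i : Fin n := ⟨m, hm⟩ with hi
  have him : i.val = m := rfl
  have key := sum_split i (fun z : Fin n → Bool =>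
    if hcIndep (lineA n β) z ∧ (∀ j : Fin n, j.val < m → z j = false)
    then hcWeight ν z else 0)
  rw [Qf, key, sum_flip]
  have h1 : (∑ z : Fin n → Bool, if z i = false then
      (if hcIndep (lineA n β) (Function.update z i true)
          ∧ (∀ j : Fin n, j.val < m → Function.update z i true j = false)
        then hcWeight ν (Function.update z i true) else 0) else 0)
      = ν i * Qf n β ν (m + 1 + β) := by
    rw [Qf, Finset.mul_sum]
    apply Finset.sum_congr rfl
    intro z _
    by_cases hzi : z i = false
    · rw [if_pos hzi]
      have hequiv : (hcIndep (lineA n β) (Function.update z i true)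
          ∧ (∀ j : Fin n, j.val < m → Function.update z i true j = false))
          ↔ (hcIndep (lineA n β) z ∧ (∀ j : Fin n, j.val < m + 1 + β → z j = false)) := by
        constructor
        · rintro ⟨h1, h2⟩
          refine ⟨indep_mono h1 (fun j hj => update_mono j hj), ?_⟩
          intro j hj
          by_cases hji : j = i
          · subst hji; exact hzi
          · by_cases hj2 : j.val < m
            · have := h2 j hj2
              rwa [Function.update_of_ne hji] at this
            · have hjm : j.val ≠ m := fun h => hji (Fin.ext (by rw [h, him]))
              have hadj : lineA n β j i := ⟨hji, by omega, by omega⟩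
              have := h1 j i hadj
              have hupd : Function.update z i true i = true := by simp
              have hj3 : Function.update z i true j = false := by
                by_contra hc
                simp only [Bool.not_eq_false] at hc
                exact this ⟨hc, hupd⟩
              rwa [Function.update_of_ne hji] at hj3
        · rintro ⟨h1, h2⟩
          constructor
          · rintro a b ⟨hne, hd1, hd2⟩ ⟨hca, hcb⟩
            by_cases ha : a = i
            · have hbne : b ≠ i := fun h => hne (ha.trans h.symm)
              have ham : a.val = m := by rw [ha, him]
              have hz : z b = false := h2 b (by omega)
              rw [Function.update_of_ne hbne, hz] at hcb
              exact Bool.false_ne_true hcb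
            · by_cases hb : b = i
              · have hbm : b.val = m := by rw [hb, him]
                have hz : z a = false := h2 a (by omega)
                rw [Function.update_of_ne ha, hz] at hca
                exact Bool.false_ne_true hca
              · rw [Function.update_of_ne ha] at hca
                rw [Function.update_of_ne hb] at hcb
                exact h1 a b ⟨hne, hd1, hd2⟩ ⟨hca, hcb⟩
          · intro j hj
            have hji : j ≠ i := by
              intro h; subst h; omega
            rw [Function.update_of_ne hji]
            exact h2 j (by omega)
      by_cases hc : hcIndep (lineA n β) z ∧ (∀ j : Fin n, j.val < m + 1 + β → z j = false)
      · rw [if_pos (hequiv.mpr hc), if_pos hc, weight_update hzi]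
      · rw [if_neg (fun h => hc (hequiv.mp h)), if_neg hc, mul_zero]
    · rw [if_neg hzi]
      rw [if_neg, mul_zero]
      rintro ⟨-, h2⟩
      exact hzi (h2 i (by omega))
  rw [h1, add_comm]
  congr 1
  apply Finset.sum_congr rfl
  intro z _
  by_cases hzi : z i = false
  · rw [if_pos hzi]
    congr 1
    apply propext
    constructor
    · rintro ⟨h1, h2⟩
      refine ⟨h1, fun j hj => ?_⟩
      by_cases hji : j = i
      · subst hji; exact hzi
      · have : j.val ≠ m := fun h => hji (Fin.ext (by rw [h, him]))
        exact h2 j (by omega)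
    · rintro ⟨h1, h2⟩
      exact ⟨h1, fun j hj => h2 j (by omega)⟩
  · rw [if_neg hzi, if_neg]
    simp only [Bool.not_eq_false] at hzi
    rintro ⟨-, h2⟩
    have := h2 i (by omega)
    rw [hzi] at this
    exact absurd this (by simp)

lemma split_mid {a b : ℕ} (hab : a + β < b) :
    (∑ z : Fin n → Bool,
        if hcIndep (lineA n β) z ∧ (∀ j : Fin n, a ≤ j.val → j.val < b → z j = false)
        then hcWeight ν z else 0)
      = Pf n β ν a * Qf n β ν b := by
  rw [Pf, Qf, ← Finset.sum_filter, ← Finset.sum_filter, ← Finset.sum_filter,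
    Finset.sum_mul_sum, ← Finset.sum_product']
  refine Finset.sum_nbij'
    (i := fun z => (fun t : Fin n => z t && decide (t.val < a),
                    fun t : Fin n => z t && decide (b ≤ t.val)))
    (j := fun p => fun t : Fin n => p.1 t || p.2 t) ?_ ?_ ?_ ?_ ?_
  · -- hi
    intro z hz
    rw [Finset.mem_filter] at hz
    obtain ⟨-, hz1, hz2⟩ := hz
    rw [Finset.mem_product, Finset.mem_filter, Finset.mem_filter]
    refine ⟨⟨Finset.mem_univ _, ?_, ?_⟩, Finset.mem_univ _, ?_, ?_⟩
    · exact indep_mono hz1 (fun j hj => (Bool.and_eq_true _ _).mp hj |>.1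
)
    · intro j hj
      simp [show ¬ (j.val < a) by omega]
    · exact indep_mono hz1 (fun j hj => (Bool.and_eq_true _ _).mp hj |>.1)
    · intro j hj
      simp [show ¬ (b ≤ j.val) by omega]
  · -- hj
    intro p hp
    rw [Finset.mem_product, Finset.mem_filter, Finset.mem_filter] at hp
    obtain ⟨⟨-, hp1, hp1s⟩, -, hp2, hp2s⟩ := hp
    have k1 : ∀ j : Fin n, p.1 j = true → j.val < a := by
      intro j hj
      by_contra hc
      rw [hp1s j (by omega)] at hj
      exact Bool.false_ne_true hj
    have k2 : ∀ j : Fin n, p.2 j = true → b ≤ j.val := by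
      intro j hj
      by_contra hc
      rw [hp2s j (by omega)] at hj
      exact Bool.false_ne_true hj
    rw [Finset.mem_filter]
    refine ⟨Finset.mem_univ _, ?_, ?_⟩
    · rintro s t ⟨hne, hd1, hd2⟩ ⟨hs, ht⟩
      rcases (Bool.or_eq_true _ _).mp hs with hs1 | hs2 <;>
        rcases (Bool.or_eq_true _ _).mp ht with ht1 | ht2
      · exact hp1 s t ⟨hne, hd1, hd2⟩ ⟨hs1, ht1⟩
      · have := k1 s hs1; have := k2 t ht2; omega
      · have := k2 s hs2; have := k1 t ht1; omega
      · exact hp2 s t ⟨hne, hd1, hd2⟩ ⟨hs2, ht2⟩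
    · intro j hj1 hj2
      simp only []
      rw [hp1s j hj1, hp2s j hj2]
      simp
  · -- left inverse
    intro z hz
    rw [Finset.mem_filter] at hz
    obtain ⟨-, -, hz2⟩ := hz
    funext t
    by_cases hzt : z t = true
    · by_cases h1 : t.val < a
      · simp [hzt, h1, show ¬ (b ≤ t.val) by omega]
      · by_cases h2 : b ≤ t.val
        · simp [hzt, h1, h2]
        · exact absurd (hz2 t (by omega) (by omega)) (by simp [hzt])
    · simp only [Bool.not_eq_true] at hzt
      simp [hzt]
  · -- right inverse
    intro p hp
    rw [Finset.mem_product, Finset.mem_filter, Finset.mem_filter] at hp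
    obtain ⟨⟨-, -, hp1s⟩, -, -, hp2s⟩ := hp
    have hab' : a < b := by omega
    refine Prod.ext ?_ ?_
    · funext t
      by_cases h1 : t.val < a
      · have : p.2 t = false := hp2s t (by omega)
        simp [this, h1]
      · have : p.1 t = false := hp1s t (by omega)
        simp [this, h1]
    · funext t
      by_cases h2 : b ≤ t.val
      · have : p.1 t = false := hp1s t (by omega)
        simp [this, h2]
      · have : p.2 t = false := hp2s t (by omega)
        simp [this, h2]
  · -- values
    intro z hz
    rw [Finset.mem_filter] at hz
    obtain ⟨-, -, hz2⟩ := hz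
    show hcWeight ν z = _ * _
    unfold hcWeight
    rw [← Finset.prod_mul_distrib]
    apply Finset.prod_congr rfl
    intro t _
    by_cases hzt : z t = true
    · by_cases h1 : t.val < a
      · simp [hzt, h1, show ¬ (b ≤ t.val) by omega]
      · by_cases h2 : b ≤ t.val
        · simp [hzt, h1, h2]
        · exact absurd (hz2 t (by omega) (by omega)) (by simp [hzt])
    · simp only [Bool.not_eq_true] at hzt
      simp [hzt]

lemma num_eq (k : Fin n) :
    (∑ z : Fin n → Bool, if hcIndep (lineA n β) z ∧ z k = true then hcWeight ν z else 0)
      = ν k * (Pf n β ν (k.val - β) * Qf n β ν (k.val + 1 + β)) := by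
  have hwin : (k.val - β) + β < k.val + 1 + β := by omega
  rw [← split_mid hwin, Finset.mul_sum]
  have e1 : (∑ z : Fin n → Bool, if hcIndep (lineA n β) z ∧ z k = true then hcWeight ν z else 0)
      = ∑ z : Fin n → Bool, if z k = true then
          (if hcIndep (lineA n β) z then hcWeight ν z else 0) else 0 := by
    apply Finset.sum_congr rfl
    intro z _
    by_cases h1 : z k = true
    · by_cases h2 : hcIndep (lineA n β) z
      · rw [if_pos ⟨h2, h1⟩, if_pos h1, if_pos h2]
      · rw [if_neg (fun hc => h2 hc.1), if_pos h1, if_neg h2]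
    · rw [if_neg (fun hc => h1 hc.2), if_neg h1]
  rw [e1, sum_flip]
  apply Finset.sum_congr rfl
  intro z _
  by_cases hzk : z k = false
  · rw [if_pos hzk]
    have hequiv : hcIndep (lineA n β) (Function.update z k true)
        ↔ (hcIndep (lineA n β) z
            ∧ ∀ j : Fin n, k.val - β ≤ j.val → j.val < k.val + 1 + β → z j = false) := by
      constructor
      · intro h1
        refine ⟨indep_mono h1 (fun j hj => update_mono j hj), ?_⟩
        intro j hj1 hj2
        by_cases hjk : j = k
        · subst hjk; exact hzk
        · have hadj : lineA n β j k := ⟨hjk, by omega, by omega⟩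
          have := h1 j k hadj
          have hupd : Function.update z k true k = true := by simp
          have hj3 : Function.update z k true j = false := by
            by_contra hc
            simp only [Bool.not_eq_false] at hc
            exact this ⟨hc, hupd⟩
          rwa [Function.update_of_ne hjk] at hj3
      · rintro ⟨h1, h2⟩
        rintro s t ⟨hne, hd1, hd2⟩ ⟨hcs, hct⟩
        by_cases hs : s = k
        · have htne : t ≠ k := fun h => hne (hs.trans h.symm)
          have hsv : s.val = k.val := by rw [hs]
          have hz : z t = false := h2 t (by omega) (by omega)
          rw [Function.update_of_ne htne, hz] at hct
          exact Bool.false_ne_true hct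
        · by_cases ht : t = k
          · have htv : t.val = k.val := by rw [ht]
            have hz : z s = false := h2 s (by omega) (by omega)
            rw [Function.update_of_ne hs, hz] at hcs
            exact Bool.false_ne_true hcs
          · rw [Function.update_of_ne hs] at hcs
            rw [Function.update_of_ne ht] at hct
            exact h1 s t ⟨hne, hd1, hd2⟩ ⟨hcs, hct⟩
    by_cases hc : hcIndep (lineA n β) z
        ∧ ∀ j : Fin n, k.val - β ≤ j.val → j.val < k.val + 1 + β → z j = false
    · rw [if_pos (hequiv.mpr hc), weight_update hzk, if_pos]
      exact ⟨hc.1, fun j hj1 hj2 => hc.2 j hj1 hj2⟩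
    · rw [if_neg (fun h => hc (hequiv.mp h)), if_neg, mul_zero]
      rintro ⟨ha, hb⟩
      exact hc ⟨ha, fun j hj1 hj2 => hb j hj1 hj2⟩
  · rw [if_neg hzk, if_neg, mul_zero]
    simp only [Bool.not_eq_false] at hzk
    rintro ⟨-, h2⟩
    have := h2 k (by omega) (by omega)
    rw [hzk] at this
    exact absurd this (by simp)

lemma prodsplit (f : ℕ → ℝ) {a b c : ℕ} (hab : a ≤ b + 1) (hbc : b ≤ c) :
    (∏ j ∈ Finset.Icc a b, f j) * (∏ j ∈ Finset.Icc (b + 1) c, f j)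
      = ∏ j ∈ Finset.Icc a c, f j := by
  rw [← Finset.prod_union (by
    simp only [Finset.disjoint_left, Finset.mem_Icc]
    omega)]
  congr 1
  ext x
  simp only [Finset.mem_union, Finset.mem_Icc]
  omega

lemma sumsplit (f : ℕ → ℝ) {a b c : ℕ} (hab : a ≤ b + 1) (hbc : b ≤ c) :
    (∑ j ∈ Finset.Icc a b, f j) + (∑ j ∈ Finset.Icc (b + 1) c, f j)
      = ∑ j ∈ Finset.Icc a c, f j := by
  rw [← Finset.sum_union (by
    simp only [Finset.disjoint_left, Finset.mem_Icc]
    omega)]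
  congr 1
  ext x
  simp only [Finset.mem_union, Finset.mem_Icc]
  omega

lemma prodbot (f : ℕ → ℝ) {a c : ℕ} (hac : a ≤ c) :
    ∏ j ∈ Finset.Icc a c, f j = f a * ∏ j ∈ Finset.Icc (a + 1) c, f j := by
  rw [← prodsplit f (Nat.le_succ a) hac, Finset.Icc_self,
    Finset.prod_singleton]

lemma prodtop (f : ℕ → ℝ) {a c : ℕ} (hac : a ≤ c + 1) :
    ∏ j ∈ Finset.Icc a (c + 1), f j = (∏ j ∈ Finset.Icc a c, f j) * f (c + 1) := by
  rw [← prodsplit f hac (Nat.le_succ c), Finset.Icc_self, Finset.prod_singleton]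

lemma sumbot (f : ℕ → ℝ) {a c : ℕ} (hac : a ≤ c) :
    ∑ j ∈ Finset.Icc a c, f j = f a + ∑ j ∈ Finset.Icc (a + 1) c, f j := by
  rw [← sumsplit f (Nat.le_succ a) hac, Finset.Icc_self,
    Finset.sum_singleton]

lemma sumtop (f : ℕ → ℝ) {a c : ℕ} (hac : a ≤ c + 1) :
    ∑ j ∈ Finset.Icc a (c + 1), f j = (∑ j ∈ Finset.Icc a c, f j) + f (c + 1) := by
  rw [← sumsplit f hac (Nat.le_succ c), Finset.Icc_self, Finset.sum_singleton]

set_option maxHeartbeats 2000000 in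
/-- line network with interference range β (1-based vertices, as in
STATEMENT 4): with the stated back-off rates, every marginal matches its target. -/
theorem stmt5 (n β : ℕ) (hβn : β < n) (θ : ℕ → ℝ) (ν : Fin n → ℝ)
    (hθpos : ∀ i, 1 ≤ i → i ≤ n → 0 < θ i)
    (hθ : ∀ i, 1 ≤ i → i + β ≤ n → ∑ s ∈ Finset.Icc i (i + β), θ s < 1)
    (hν : ∀ k : Fin n, ν k =
      θ (k.val + 1) *
        (∏ j ∈ Finset.Icc (max (k.val + 1) (β + 1)) (min (k.val + 1 + β) n - 1),
          (1 - ∑ s ∈ Finset.Icc (j - β + 1) j, θ s)) /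
        (∏ j ∈ Finset.Icc (max (k.val + 1) (β + 1)) (min (k.val + 1 + β) n),
          (1 - ∑ s ∈ Finset.Icc (j - β) j, θ s))) :
    ∀ k : Fin n,
      hcMarginal n (fun a b : Fin n => a ≠ b ∧ a.val ≤ b.val + β ∧ b.val ≤ a.val + β)
        ν k = θ (k.val + 1) := by
  have hf_pos : ∀ j, β + 1 ≤ j → j ≤ n →
      (0:ℝ) < 1 - ∑ s ∈ Finset.Icc (j - β) j, θ s := by
    intro j h1 h2
    have h := hθ (j - β) (by omega) (by omega)
    rw [show j - β + β = j by omega] at h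
    linarith
  have hg_pos : ∀ j, β + 1 ≤ j → j ≤ n →
      (0:ℝ) < 1 - ∑ s ∈ Finset.Icc (j - β + 1) j, θ s := by
    intro j h1 h2
    have h := hf_pos j h1 h2
    have hsum : ∑ s ∈ Finset.Icc (j - β) j, θ s
        = θ (j - β) + ∑ s ∈ Finset.Icc (j - β + 1) j, θ s := sumbot θ (by omega)
    have hp := hθpos (j - β) (by omega) (by omega)
    linarith
  have hfprod_pos : ∀ a b : ℕ, β + 1 ≤ a → b ≤ n →
      (0:ℝ) < ∏ j ∈ Finset.Icc a b, (1 - ∑ s ∈ Finset.Icc (j - β) j, θ s) := by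
    intro a b ha hb
    apply Finset.prod_pos
    intro j hj
    rw [Finset.mem_Icc] at hj
    exact hf_pos j (by omega) (by omega)
  have hgprod_pos : ∀ a b : ℕ, β + 1 ≤ a → b ≤ n →
      (0:ℝ) < ∏ j ∈ Finset.Icc a b, (1 - ∑ s ∈ Finset.Icc (j - β + 1) j, θ s) := by
    intro a b ha hb
    apply Finset.prod_pos
    intro j hj
    rw [Finset.mem_Icc] at hj
    exact hg_pos j (by omega) (by omega)
  -- closed form for the left partition function
  have Pf_closed : ∀ d m : ℕ, m ≤ d → m + β ≤ n → Pf n β ν m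
      = (∏ j ∈ Finset.Icc (β+1) (m+β), (1 - ∑ s ∈ Finset.Icc (j - β + 1) j, θ s))
        / (∏ j ∈ Finset.Icc (β+1) (m+β), (1 - ∑ s ∈ Finset.Icc (j - β) j, θ s)) := by
    intro d
    induction d with
    | zero =>
      intro m h1 h2
      rw [show m = 0 by omega, Pf_zero, Finset.Icc_eq_empty (by omega)]
      simp
    | succ d IH =>
      intro m h1 h2
      match m with
      | 0 =>
        rw [Pf_zero, Finset.Icc_eq_empty (by omega)]
        simp
      | (m' + 1) =>
        have hm' : m' < n := by omega
        rw [Pf_succ hm', IH m' (by omega) (by omega)]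
        have hsub : Pf n β ν (m' - β)
            = (∏ j ∈ Finset.Icc (β+1) m', (1 - ∑ s ∈ Finset.Icc (j - β + 1) j, θ s))
              / (∏ j ∈ Finset.Icc (β+1) m', (1 - ∑ s ∈ Finset.Icc (j - β) j, θ s)) := by
          by_cases hbm : β ≤ m'
          · have h := IH (m' - β) (by omega) (by omega)
            rwa [show m' - β + β = m' by omega] at h
          · rw [show m' - β = 0 by omega, Pf_zero, Finset.Icc_eq_empty (by omega)]
            simp
        rw [hsub, hν ⟨m', hm'⟩]
        simp only [show ((⟨m', hm'⟩ : Fin n) : ℕ) = m' from rfl]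
        rw [show min (m' + 1 + β) n = m' + 1 + β by omega,
          show m' + 1 + β - 1 = m' + β by omega,
          show m' + 1 + β = m' + β + 1 by omega]
        rw [prodtop (fun j => (1 - ∑ s ∈ Finset.Icc (j - β + 1) j, θ s)) (by omega),
          prodtop (fun j => (1 - ∑ s ∈ Finset.Icc (j - β) j, θ s)) (by omega),
          prodtop (fun j => (1 - ∑ s ∈ Finset.Icc (j - β) j, θ s)) (by omega)]
        rw [show m' + β + 1 - β = m' + 1 by omega]
        have e1 : (∏ j ∈ Finset.Icc (β+1) m', (1 - ∑ s ∈ Finset.Icc (j - β + 1) j, θ s))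
            * (∏ j ∈ Finset.Icc (max (m'+1) (β+1)) (m'+β),
                (1 - ∑ s ∈ Finset.Icc (j - β + 1) j, θ s))
            = ∏ j ∈ Finset.Icc (β+1) (m'+β), (1 - ∑ s ∈ Finset.Icc (j - β + 1) j, θ s) := by
          by_cases hbm : β ≤ m'
          · rw [show max (m'+1) (β+1) = m' + 1 by omega]
            exact prodsplit _ (by omega) (by omega)
          · rw [Finset.Icc_eq_empty (show ¬ (β + 1 ≤ m') by omega), Finset.prod_empty,
              one_mul, show max (m'+1) (β+1) = β + 1 by omega]
        have e2 : (∏ j ∈ Finset.Icc (β+1) m', (1 - ∑ s ∈ Finset.Icc (j - β) j, θ s))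
            * (∏ j ∈ Finset.Icc (max (m'+1) (β+1)) (m'+β),
                (1 - ∑ s ∈ Finset.Icc (j - β) j, θ s))
            = ∏ j ∈ Finset.Icc (β+1) (m'+β), (1 - ∑ s ∈ Finset.Icc (j - β) j, θ s) := by
          by_cases hbm : β ≤ m'
          · rw [show max (m'+1) (β+1) = m' + 1 by omega]
            exact prodsplit _ (by omega) (by omega)
          · rw [Finset.Icc_eq_empty (show ¬ (β + 1 ≤ m') by omega), Finset.prod_empty,
              one_mul, show max (m'+1) (β+1) = β + 1 by omega]
        rw [← e1, ← e2]
        have hx : (1 - ∑ s ∈ Finset.Icc (m'+1) (m'+β+1), θ s) + θ (m'+1)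
            = 1 - ∑ s ∈ Finset.Icc (m'+1+1) (m'+β+1), θ s := by
          have h := sumbot θ (a := m'+1) (c := m'+β+1) (by omega)
          linarith
        rw [← hx]
        have hB' : (∏ j ∈ Finset.Icc (β+1) m',
            (1 - ∑ s ∈ Finset.Icc (j - β) j, θ s)) ≠ 0 :=
          ne_of_gt (hfprod_pos _ _ (le_refl _) (by omega))
        have hE : (∏ j ∈ Finset.Icc (max (m'+1) (β+1)) (m'+β),
            (1 - ∑ s ∈ Finset.Icc (j - β) j, θ s)) ≠ 0 :=
          ne_of_gt (hfprod_pos _ _ (le_max_right _ _) (by omega))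
        have hy : (1 - ∑ s ∈ Finset.Icc (m'+1) (m'+β+1), θ s) ≠ 0 := by
          have h := hf_pos (m'+β+1) (by omega) (by omega)
          rw [show m'+β+1-β = m'+1 by omega] at h
          exact ne_of_gt h
        field_simp
  -- closed form for the right partition function, m ≥ β
  have Qf_closed : ∀ d m : ℕ, n - m ≤ d → β ≤ m → Qf n β ν m
      = (∏ j ∈ Finset.Icc m (n-1), (1 - ∑ s ∈ Finset.Icc (j - β + 1) j, θ s))
        / (∏ j ∈ Finset.Icc (m+1) n, (1 - ∑ s ∈ Finset.Icc (j - β) j, θ s)) := by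
    intro d
    induction d with
    | zero =>
      intro m h1 h2
      rw [Qf_top (by omega), Finset.Icc_eq_empty (by omega),
        Finset.Icc_eq_empty (by omega)]
      simp
    | succ d IH =>
      intro m h1 h2
      by_cases hmn : n ≤ m
      · rw [Qf_top hmn, Finset.Icc_eq_empty (by omega), Finset.Icc_eq_empty (by omega)]
        simp
      · push_neg at hmn
        rw [Qf_rec hmn, IH (m+1) (by omega) (by omega), IH (m+1+β) (by omega) (by omega),
          hν ⟨m, hmn⟩]
        simp only [show ((⟨m, hmn⟩ : Fin n) : ℕ) = m from rfl]
        rw [show max (m+1) (β+1) = m + 1 by omega]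
        rw [show Finset.Icc (m+1+β) (n-1) = Finset.Icc (min (m+1+β) n) (n-1) by
            ext x; simp only [Finset.mem_Icc]; omega,
          show Finset.Icc (m+1+β+1) n = Finset.Icc (min (m+1+β) n + 1) n by
            ext x; simp only [Finset.mem_Icc]; omega]
        have hM1 : m + 1 ≤ min (m+1+β) n := by omega
        have s1 : ∏ j ∈ Finset.Icc m (n-1), (1 - ∑ s ∈ Finset.Icc (j - β + 1) j, θ s)
            = (1 - ∑ s ∈ Finset.Icc (m - β + 1) m, θ s)
              * ∏ j ∈ Finset.Icc (m+1) (n-1), (1 - ∑ s ∈ Finset.Icc (j - β + 1) j, θ s) := by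
          rw [prodbot (fun j => (1 - ∑ s ∈ Finset.Icc (j - β + 1) j, θ s)) (by omega)]
        have s2 : ∏ j ∈ Finset.Icc (m+1) n, (1 - ∑ s ∈ Finset.Icc (j - β) j, θ s)
            = (1 - ∑ s ∈ Finset.Icc (m + 1 - β) (m+1), θ s)
              * ∏ j ∈ Finset.Icc (m+2) n, (1 - ∑ s ∈ Finset.Icc (j - β) j, θ s) := by
          rw [prodbot (fun j => (1 - ∑ s ∈ Finset.Icc (j - β) j, θ s)) (by omega)]
        have s3 : (∏ j ∈ Finset.Icc (m+1) (min (m+1+β) n - 1),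
              (1 - ∑ s ∈ Finset.Icc (j - β + 1) j, θ s))
            * (∏ j ∈ Finset.Icc (min (m+1+β) n) (n-1),
              (1 - ∑ s ∈ Finset.Icc (j - β + 1) j, θ s))
            = ∏ j ∈ Finset.Icc (m+1) (n-1), (1 - ∑ s ∈ Finset.Icc (j - β + 1) j, θ s) := by
          have h := prodsplit (fun j => (1 - ∑ s ∈ Finset.Icc (j - β + 1) j, θ s))
            (a := m+1) (b := min (m+1+β) n - 1) (c := n-1) (by omega) (by omega)
          rwa [show min (m+1+β) n - 1 + 1 = min (m+1+β) n by omega] at h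
        have s4 : (∏ j ∈ Finset.Icc (m+2) (min (m+1+β) n),
              (1 - ∑ s ∈ Finset.Icc (j - β) j, θ s))
            * (∏ j ∈ Finset.Icc (min (m+1+β) n + 1) n,
              (1 - ∑ s ∈ Finset.Icc (j - β) j, θ s))
            = ∏ j ∈ Finset.Icc (m+2) n, (1 - ∑ s ∈ Finset.Icc (j - β) j, θ s) :=
          prodsplit _ (by omega) (by omega)
        have s5 : ∏ j ∈ Finset.Icc (m+1) (min (m+1+β) n),
              (1 - ∑ s ∈ Finset.Icc (j - β) j, θ s)
            = (1 - ∑ s ∈ Finset.Icc (m + 1 - β) (m+1), θ s)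
              * ∏ j ∈ Finset.Icc (m+2) (min (m+1+β) n),
                (1 - ∑ s ∈ Finset.Icc (j - β) j, θ s) := by
          rw [prodbot (fun j => (1 - ∑ s ∈ Finset.Icc (j - β) j, θ s)) (by omega)]
        have hx : (1 - ∑ s ∈ Finset.Icc (m + 1 - β) (m+1), θ s) + θ (m+1)
            = 1 - ∑ s ∈ Finset.Icc (m - β + 1) m, θ s := by
          have h := sumtop θ (a := m - β + 1) (c := m) (by omega)
          rw [show m + 1 - β = m - β + 1 by omega]
          linarith
        rw [s1, s2, ← s3, ← s4, s5, ← hx]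
        have n1 : (1 - ∑ s ∈ Finset.Icc (m + 1 - β) (m+1), θ s) ≠ 0 := by
          have h := hf_pos (m+1) (by omega) (by omega)
          exact ne_of_gt h
        have n2 : (∏ j ∈ Finset.Icc (m+2) (min (m+1+β) n),
            (1 - ∑ s ∈ Finset.Icc (j - β) j, θ s)) ≠ 0 :=
          ne_of_gt (hfprod_pos _ _ (by omega) (by omega))
        have n3 : (∏ j ∈ Finset.Icc (min (m+1+β) n + 1) n,
            (1 - ∑ s ∈ Finset.Icc (j - β) j, θ s)) ≠ 0 :=
          ne_of_gt (hfprod_pos _ _ (by omega) (by omega))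
        field_simp
  -- right partition function below β
  have Qf_low : ∀ d m : ℕ, β - m ≤ d → m ≤ β → Qf n β ν m
      = (1 - ∑ s ∈ Finset.Icc 1 m, θ s) *
        ((∏ j ∈ Finset.Icc (β+1) (n-1), (1 - ∑ s ∈ Finset.Icc (j - β + 1) j, θ s))
          / (∏ j ∈ Finset.Icc (β+1) n, (1 - ∑ s ∈ Finset.Icc (j - β) j, θ s))) := by
    have base : Qf n β ν β
        = (1 - ∑ s ∈ Finset.Icc 1 β, θ s) *
          ((∏ j ∈ Finset.Icc (β+1) (n-1), (1 - ∑ s ∈ Finset.Icc (j - β + 1) j, θ s))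
            / (∏ j ∈ Finset.Icc (β+1) n, (1 - ∑ s ∈ Finset.Icc (j - β) j, θ s))) := by
      rw [Qf_closed n β (by omega) (le_refl β)]
      rw [prodbot (fun j => (1 - ∑ s ∈ Finset.Icc (j - β + 1) j, θ s)) (by omega)]
      rw [show β - β + 1 = 1 by omega, mul_div_assoc]
    intro d
    induction d with
    | zero =>
      intro m h1 h2
      rw [show m = β by omega]
      exact base
    | succ d IH =>
      intro m h1 h2
      by_cases hmβ : β ≤ m
      · rw [show m = β by omega]
        exact base
      · have hmn : m < n := by omega
        rw [Qf_rec hmn, IH (m+1) (by omega) (by omega),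
          Qf_closed n (m+1+β) (by omega) (by omega), hν ⟨m, hmn⟩]
        simp only [show ((⟨m, hmn⟩ : Fin n) : ℕ) = m from rfl]
        rw [show max (m+1) (β+1) = β + 1 by omega]
        rw [show Finset.Icc (m+1+β) (n-1) = Finset.Icc (min (m+1+β) n) (n-1) by
            ext x; simp only [Finset.mem_Icc]; omega,
          show Finset.Icc (m+1+β+1) n = Finset.Icc (min (m+1+β) n + 1) n by
            ext x; simp only [Finset.mem_Icc]; omega]
        have hM1 : β + 1 ≤ min (m+1+β) n := by omega
        have t1 : (∏ j ∈ Finset.Icc (β+1) (min (m+1+β) n - 1),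
              (1 - ∑ s ∈ Finset.Icc (j - β + 1) j, θ s))
            * (∏ j ∈ Finset.Icc (min (m+1+β) n) (n-1),
              (1 - ∑ s ∈ Finset.Icc (j - β + 1) j, θ s))
            = ∏ j ∈ Finset.Icc (β+1) (n-1), (1 - ∑ s ∈ Finset.Icc (j - β + 1) j, θ s) := by
          have h := prodsplit (fun j => (1 - ∑ s ∈ Finset.Icc (j - β + 1) j, θ s))
            (a := β+1) (b := min (m+1+β) n - 1) (c := n-1) (by omega) (by omega)
          rwa [show min (m+1+β) n - 1 + 1 = min (m+1+β) n by omega] at h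
        have t2 : (∏ j ∈ Finset.Icc (β+1) (min (m+1+β) n),
              (1 - ∑ s ∈ Finset.Icc (j - β) j, θ s))
            * (∏ j ∈ Finset.Icc (min (m+1+β) n + 1) n,
              (1 - ∑ s ∈ Finset.Icc (j - β) j, θ s))
            = ∏ j ∈ Finset.Icc (β+1) n, (1 - ∑ s ∈ Finset.Icc (j - β) j, θ s) :=
          prodsplit _ (by omega) (by omega)
        have hs : ∑ s ∈ Finset.Icc 1 (m+1), θ s = (∑ s ∈ Finset.Icc 1 m, θ s) + θ (m+1) :=
          sumtop θ (by omega)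
        rw [hs, ← t1, ← t2]
        have n1 : (∏ j ∈ Finset.Icc (β+1) (min (m+1+β) n),
            (1 - ∑ s ∈ Finset.Icc (j - β) j, θ s)) ≠ 0 :=
          ne_of_gt (hfprod_pos _ _ (by omega) (by omega))
        have n2 : (∏ j ∈ Finset.Icc (min (m+1+β) n + 1) n,
            (1 - ∑ s ∈ Finset.Icc (j - β) j, θ s)) ≠ 0 :=
          ne_of_gt (hfprod_pos _ _ (by omega) (by omega))
        field_simp
        ring
  -- the partition function
  have hZv : hcZ n (lineA n β) ν
      = (∏ j ∈ Finset.Icc (β+1) (n-1), (1 - ∑ s ∈ Finset.Icc (j - β + 1) j, θ s))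
        / (∏ j ∈ Finset.Icc (β+1) n, (1 - ∑ s ∈ Finset.Icc (j - β) j, θ s)) := by
    rw [hcZ_eq_Qf, Qf_low β 0 (by omega) (by omega), Finset.Icc_eq_empty (by omega)]
    simp
  -- finish
  intro k
  have hkn : k.val < n := k.isLt
  show hcMarginal n (lineA n β) ν k = θ (k.val + 1)
  have hPk : Pf n β ν (k.val - β)
      = (∏ j ∈ Finset.Icc (β+1) k.val, (1 - ∑ s ∈ Finset.Icc (j - β + 1) j, θ s))
        / (∏ j ∈ Finset.Icc (β+1) k.val, (1 - ∑ s ∈ Finset.Icc (j - β) j, θ s)) := by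
    rw [Pf_closed n (k.val - β) (by omega) (by omega),
      show Finset.Icc (β+1) (k.val - β + β) = Finset.Icc (β+1) k.val by
        ext x; simp only [Finset.mem_Icc]; omega]
  rw [hcMarginal, num_eq k, hZv, hPk, Qf_closed n (k.val + 1 + β) (by omega) (by omega),
    hν k]
  rw [show Finset.Icc (k.val+1+β) (n-1) = Finset.Icc (min (k.val+1+β) n) (n-1) by
      ext x; simp only [Finset.mem_Icc]; omega,
    show Finset.Icc (k.val+1+β+1) n = Finset.Icc (min (k.val+1+β) n + 1) n by
      ext x; simp only [Finset.mem_Icc]; omega]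
  have hM1 : β + 1 ≤ min (k.val+1+β) n := by omega
  have hM2 : k.val + 1 ≤ min (k.val+1+β) n := by omega
  have u1 : (∏ j ∈ Finset.Icc (β+1) k.val, (1 - ∑ s ∈ Finset.Icc (j - β + 1) j, θ s))
      * (∏ j ∈ Finset.Icc (max (k.val+1) (β+1)) (min (k.val+1+β) n - 1),
        (1 - ∑ s ∈ Finset.Icc (j - β + 1) j, θ s))
      = ∏ j ∈ Finset.Icc (β+1) (min (k.val+1+β) n - 1),
        (1 - ∑ s ∈ Finset.Icc (j - β + 1) j, θ s) := by
    by_cases hbk : β ≤ k.val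
    · rw [show max (k.val+1) (β+1) = k.val + 1 by omega]
      exact prodsplit _ (by omega) (by omega)
    · rw [Finset.Icc_eq_empty (show ¬ (β + 1 ≤ k.val) by omega), Finset.prod_empty,
        one_mul, show max (k.val+1) (β+1) = β + 1 by omega]
  have u2 : (∏ j ∈ Finset.Icc (β+1) (min (k.val+1+β) n - 1),
        (1 - ∑ s ∈ Finset.Icc (j - β + 1) j, θ s))
      * (∏ j ∈ Finset.Icc (min (k.val+1+β) n) (n-1),
        (1 - ∑ s ∈ Finset.Icc (j - β + 1) j, θ s))
      = ∏ j ∈ Finset.Icc (β+1) (n-1), (1 - ∑ s ∈ Finset.Icc (j - β + 1) j, θ s) := by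
    have h := prodsplit (fun j => (1 - ∑ s ∈ Finset.Icc (j - β + 1) j, θ s))
      (a := β+1) (b := min (k.val+1+β) n - 1) (c := n-1) (by omega) (by omega)
    rwa [show min (k.val+1+β) n - 1 + 1 = min (k.val+1+β) n by omega] at h
  have v1 : (∏ j ∈ Finset.Icc (β+1) k.val, (1 - ∑ s ∈ Finset.Icc (j - β) j, θ s))
      * (∏ j ∈ Finset.Icc (max (k.val+1) (β+1)) (min (k.val+1+β) n),
        (1 - ∑ s ∈ Finset.Icc (j - β) j, θ s))
      = ∏ j ∈ Finset.Icc (β+1) (min (k.val+1+β) n),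
        (1 - ∑ s ∈ Finset.Icc (j - β) j, θ s) := by
    by_cases hbk : β ≤ k.val
    · rw [show max (k.val+1) (β+1) = k.val + 1 by omega]
      exact prodsplit _ (by omega) (by omega)
    · rw [Finset.Icc_eq_empty (show ¬ (β + 1 ≤ k.val) by omega), Finset.prod_empty,
        one_mul, show max (k.val+1) (β+1) = β + 1 by omega]
  have v2 : (∏ j ∈ Finset.Icc (β+1) (min (k.val+1+β) n),
        (1 - ∑ s ∈ Finset.Icc (j - β) j, θ s))
      * (∏ j ∈ Finset.Icc (min (k.val+1+β) n + 1) n,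
        (1 - ∑ s ∈ Finset.Icc (j - β) j, θ s))
      = ∏ j ∈ Finset.Icc (β+1) n, (1 - ∑ s ∈ Finset.Icc (j - β) j, θ s) :=
    prodsplit _ (by omega) (by omega)
  rw [← u2, ← u1, ← v2, ← v1]
  have n1 : (∏ j ∈ Finset.Icc (β+1) k.val,
      (1 - ∑ s ∈ Finset.Icc (j - β) j, θ s)) ≠ 0 :=
    ne_of_gt (hfprod_pos _ _ (by omega) (by omega))
  have n2 : (∏ j ∈ Finset.Icc (max (k.val+1) (β+1)) (min (k.val+1+β) n),
      (1 - ∑ s ∈ Finset.Icc (j - β) j, θ s)) ≠ 0 :=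
    ne_of_gt (hfprod_pos _ _ (le_max_right _ _) (by omega))
  have n3 : (∏ j ∈ Finset.Icc (min (k.val+1+β) n + 1) n,
      (1 - ∑ s ∈ Finset.Icc (j - β) j, θ s)) ≠ 0 :=
    ne_of_gt (hfprod_pos _ _ (by omega) (by omega))
  have g1 : (∏ j ∈ Finset.Icc (β+1) k.val,
      (1 - ∑ s ∈ Finset.Icc (j - β + 1) j, θ s)) ≠ 0 :=
    ne_of_gt (hgprod_pos _ _ (by omega) (by omega))
  have g2 : (∏ j ∈ Finset.Icc (max (k.val+1) (β+1)) (min (k.val+1+β) n - 1),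
      (1 - ∑ s ∈ Finset.Icc (j - β + 1) j, θ s)) ≠ 0 :=
    ne_of_gt (hgprod_pos _ _ (le_max_right _ _) (by omega))
  have g3 : (∏ j ∈ Finset.Icc (min (k.val+1+β) n) (n-1),
      (1 - ∑ s ∈ Finset.Icc (j - β + 1) j, θ s)) ≠ 0 :=
    ne_of_gt (hgprod_pos _ _ (by omega) (by omega))
  field_simp
end

section
/- Suppose a graph G on {1,...,n} has the property that {k+1,...,n} is a clique, and rates ν_1,...,ν_n > 0 realize hard-core marginals θ_1,...,θ_n on G. Form G~ by adding a vertex n+1 adjacent exactly to {k+1,...,n}. For any θ_{n+1} with 0 < θ_{n+1} < 1 − (θ_{k+1}+...+θ_n), the rates ν~_i = ν_i for i ≤ k, ν~_i = ν_i · (1 − ∑_{j=k+1}^n θ_j)/(1 − θ_{n+1} − ∑_{j=k+1}^n θ_j) for k+1 ≤ i ≤ n, and ν~_{n+1} = θ_{n+1}/(1 − θ_{n+1} − ∑_{j=k+1}^n θ_j), realize hard-core marginals (θ_1,...,θ_n,θ_{n+1}) on G~. -/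
open scoped Classical
open Finset

/-!
Write a configuration of the extended graph as `Fin.snoc z b`. An independent `z` has at most
one active vertex in the clique `C`, so the rates `ν'` multiply its weight by
`α = 1 + ν' (last n)` if some clique vertex is active; otherwise `z` extends by `b = false` and
by `b = true`, with total weight `(1 + ν' (last n)) · w z = α · w z`. Thus every event about the
old vertices gains the factor `α`, and old marginals are unchanged. The new vertex is active
exactly on clique-free configurations, of probability `1 - ∑_{j ∈ C} θ_j`, so its marginal is
`ν' (last n) (1 - ∑ θ_j) / α`, which equals `t` for the prescribed rates.
-/

/-- `Z · π(P)`: the unnormalized probability of the event `P`. -/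
noncomputable def hcMass {n : ℕ} (A : Fin n → Fin n → Prop) (ν : Fin n → ℝ)
    (P : (Fin n → Bool) → Prop) : ℝ :=
  ∑ z : Fin n → Bool, if hcIndep A z ∧ P z then hcWeight ν z else 0

section Basic

variable {n : ℕ} {A : Fin n → Fin n → Prop} {ν : Fin n → ℝ}

theorem hcZ_eq_hcMass : hcZ n A ν = hcMass A ν fun _ => True := by
  simp [hcZ, hcMass]

theorem hcMarginal_eq_hcMass_div (i : Fin n) :
    hcMarginal n A ν i = hcMass A ν (· i = true) / hcZ n A ν := by
  unfold hcMarginal hcMass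
  congr!

theorem hcMass_not (P : (Fin n → Bool) → Prop) :
    hcMass A ν (fun z => ¬P z) = hcZ n A ν - hcMass A ν P := by
  rw [eq_sub_iff_add_eq, hcZ, hcMass, hcMass, ← sum_add_distrib]
  refine sum_congr rfl fun z _ => ?_
  by_cases hP : P z <;> simp [hP]

theorem hcWeight_nonneg (hν : ∀ i, 0 ≤ ν i) (z : Fin n → Bool) : 0 ≤ hcWeight ν z :=
  prod_nonneg fun i _ => by split <;> simp [hν i]

theorem one_le_hcZ (hν : ∀ i, 0 ≤ ν i) : 1 ≤ hcZ n A ν := by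
  have hempty : hcIndep A fun _ => false := by simp [hcIndep]
  have := single_le_sum (f := fun z => if hcIndep A z then hcWeight ν z else 0)
    (fun z _ => by split <;> simp [hcWeight_nonneg hν]) (mem_univ fun _ => false)
  simpa [hcZ, hempty, hcWeight] using this

theorem hcWeight_congr {ν₁ ν₂ : Fin n → ℝ} {z : Fin n → Bool}
    (h : ∀ i, z i = true → ν₁ i = ν₂ i) : hcWeight ν₁ z = hcWeight ν₂ z :=
  prod_congr rfl fun i _ => by by_cases hi : z i = true <;> simp [hi, h]

end Basic

section Clique

variable {n : ℕ} {A : Fin n → Fin n → Prop} {ν : Fin n → ℝ} {C : Finset (Fin n)}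

theorem card_filter_clique_eq_ite (hC : ∀ i ∈ C, ∀ j ∈ C, i ≠ j → A i j)
    {z : Fin n → Bool} (hz : hcIndep A z) :
    #{i ∈ C | z i = true} = if ∃ i ∈ C, z i = true then 1 else 0 := by
  split_ifs with h
  · refine le_antisymm (card_le_one.2 fun i hi j hj => ?_) (card_pos.2 ?_)
    · simp only [mem_filter] at hi hj
      by_contra hij
      exact hz i j (hC i hi.1 j hj.1 hij) ⟨hi.2, hj.2⟩
    · obtain ⟨i, hi, hzi⟩ := h
      exact ⟨i, mem_filter.2 ⟨hi, hzi⟩⟩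
  · simpa [filter_eq_empty_iff] using h

theorem hcWeight_mul_on (C : Finset (Fin n)) (α : ℝ) (z : Fin n → Bool) :
    hcWeight (fun i => if i ∈ C then α * ν i else ν i) z =
      α ^ #{i ∈ C | z i = true} * hcWeight ν z := by
  have : α ^ #{i ∈ C | z i = true} = ∏ i, if i ∈ C ∧ z i = true then α else 1 := by
    rw [prod_ite, prod_const_one, mul_one, prod_const]
    congr 2
    ext
    simp
  rw [this, hcWeight, hcWeight, ← prod_mul_distrib]
  refine prod_congr rfl fun i _ => ?_
  by_cases hi : i ∈ C <;> by_cases hz : z i = true <;> simp [hi, hz]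

theorem hcMass_exists_mem_clique (hC : ∀ i ∈ C, ∀ j ∈ C, i ≠ j → A i j) :
    hcMass A ν (fun z => ∃ i ∈ C, z i = true) = ∑ i ∈ C, hcMass A ν (· i = true) := by
  simp only [hcMass]
  rw [sum_comm]
  refine sum_congr rfl fun z _ => ?_
  by_cases hz : hcIndep A z
  · have := card_filter_clique_eq_ite hC hz
    simp only [hz, true_and]
    rw [← sum_filter, sum_const, this]
    split_ifs <;> simp
  · simp [hz]

end Clique

structure IsVertexExtension {n : ℕ} (A : Fin n → Fin n → Prop) (C : Finset (Fin n))
    (G' : SimpleGraph (Fin (n + 1))) : Prop where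
  adj_castSucc : ∀ i j, G'.Adj i.castSucc j.castSucc ↔ A i j
  adj_last : ∀ i, G'.Adj (Fin.last n) i.castSucc ↔ i ∈ C

section Extension

variable {n : ℕ} {A : Fin n → Fin n → Prop} {ν : Fin n → ℝ} {C : Finset (Fin n)}
  {G' : SimpleGraph (Fin (n + 1))} {ν' : Fin (n + 1) → ℝ}

theorem sum_fun_bool_eq_sum_snoc {M : Type*} [AddCommMonoid M] (F : (Fin (n + 1) → Bool) → M) :
    ∑ g, F g = ∑ z : Fin n → Bool, ∑ b : Bool, F (Fin.snoc z b) := by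
  rw [← (Fin.snocEquiv fun _ => Bool).sum_comp, Fintype.sum_prod_type_right]
  rfl

theorem hcWeight_snoc (z : Fin n → Bool) (b : Bool) :
    hcWeight ν' (Fin.snoc z b) =
      hcWeight (Fin.init ν') z * if b then ν' (Fin.last n) else 1 := by
  simp [hcWeight, Fin.prod_univ_castSucc, Fin.init]

theorem hcIndep_snoc_iff (hG' : IsVertexExtension A C G') {z : Fin n → Bool} {b : Bool} :
    hcIndep G'.Adj (Fin.snoc z b) ↔ hcIndep A z ∧ (b = true → ¬∃ i ∈ C, z i = true) := by
  constructor
  · intro h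
    refine ⟨fun i j hij => by simpa using h _ _ ((hG'.adj_castSucc i j).2 hij), ?_⟩
    rintro rfl ⟨i, hi, hzi⟩
    exact h _ _ ((hG'.adj_last i).2 hi) (by simpa using hzi)
  · rintro ⟨hz, hb⟩ i j hij
    induction i using Fin.lastCases <;> induction j using Fin.lastCases
    · exact absurd hij (G'.loopless.irrefl _)
    · rw [hG'.adj_last] at hij
      simpa using fun hb' hz' => hb hb' ⟨_, hij, hz'⟩
    · rw [G'.adj_comm, hG'.adj_last] at hij
      simpa using fun hz' hb' => hb hb' ⟨_, hij, hz'⟩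
    · simpa using hz _ _ ((hG'.adj_castSucc _ _).1 hij)

theorem sum_bool_snoc_hcWeight (hC : ∀ i ∈ C, ∀ j ∈ C, i ≠ j → A i j)
    (hG' : IsVertexExtension A C G')
    (hν' : ∀ i, ν' i.castSucc = if i ∈ C then (1 + ν' (Fin.last n)) * ν i else ν i)
    (z : Fin n → Bool) :
    (∑ b : Bool, if hcIndep G'.Adj (Fin.snoc z b) then hcWeight ν' (Fin.snoc z b) else 0) =
      (1 + ν' (Fin.last n)) * if hcIndep A z then hcWeight ν z else 0 := by
  have hinit : Fin.init ν' = fun i => if i ∈ C then (1 + ν' (Fin.last n)) * ν i else ν i :=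
    funext hν'
  simp only [Fintype.sum_bool, hcIndep_snoc_iff hG', hcWeight_snoc, hinit, hcWeight_mul_on]
  by_cases hz : hcIndep A z
  · by_cases hfree : ∃ i ∈ C, z i = true <;>
      simp [hz, hfree, card_filter_clique_eq_ite hC hz]
    ring
  · simp [hz]

theorem hcMass_snoc_init (hC : ∀ i ∈ C, ∀ j ∈ C, i ≠ j → A i j)
    (hG' : IsVertexExtension A C G')
    (hν' : ∀ i, ν' i.castSucc = if i ∈ C then (1 + ν' (Fin.last n)) * ν i else ν i)
    (P : (Fin n → Bool) → Prop) :
    hcMass G'.Adj ν' (fun g => P (Fin.init g)) = (1 + ν' (Fin.last n)) * hcMass A ν P := by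
  rw [hcMass, sum_fun_bool_eq_sum_snoc, hcMass, mul_sum]
  refine sum_congr rfl fun z _ => ?_
  by_cases hP : P z
  · simpa [hP] using sum_bool_snoc_hcWeight hC hG' hν' z
  · simp [hP]

theorem hcMass_snoc_last (hG' : IsVertexExtension A C G')
    (hν' : ∀ i ∉ C, ν' i.castSucc = ν i) :
    hcMass G'.Adj ν' (· (Fin.last n) = true) =
      ν' (Fin.last n) * hcMass A ν (fun z => ¬∃ i ∈ C, z i = true) := by
  rw [hcMass, sum_fun_bool_eq_sum_snoc, hcMass, mul_sum]
  refine sum_congr rfl fun z _ => ?_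
  by_cases h : hcIndep A z ∧ ¬∃ i ∈ C, z i = true
  · have hw : hcWeight (Fin.init ν') z = hcWeight ν z :=
      hcWeight_congr fun i hi => hν' i fun hiC => h.2 ⟨i, hiC, hi⟩
    simp [hcIndep_snoc_iff hG', h, hcWeight_snoc, hw, mul_comm]
  · have h' : ¬(hcIndep A z ∧ ∀ i ∈ C, z i = false) := by simpa using h
    simp [hcIndep_snoc_iff hG', h']

theorem hcZ_snoc (hC : ∀ i ∈ C, ∀ j ∈ C, i ≠ j → A i j)
    (hG' : IsVertexExtension A C G')
    (hν' : ∀ i, ν' i.castSucc = if i ∈ C then (1 + ν' (Fin.last n)) * ν i else ν i) :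
    hcZ (n + 1) G'.Adj ν' = (1 + ν' (Fin.last n)) * hcZ n A ν := by
  rw [hcZ_eq_hcMass, hcZ_eq_hcMass]
  exact hcMass_snoc_init hC hG' hν' fun _ => True

theorem hcMarginal_snoc_castSucc (hC : ∀ i ∈ C, ∀ j ∈ C, i ≠ j → A i j)
    (hG' : IsVertexExtension A C G')
    (hν' : ∀ i, ν' i.castSucc = if i ∈ C then (1 + ν' (Fin.last n)) * ν i else ν i)
    (hα : 1 + ν' (Fin.last n) ≠ 0) (i : Fin n) :
    hcMarginal (n + 1) G'.Adj ν' i.castSucc = hcMarginal n A ν i := by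
  have hmass : hcMass G'.Adj ν' (· i.castSucc = true) =
      (1 + ν' (Fin.last n)) * hcMass A ν (· i = true) :=
    hcMass_snoc_init hC hG' hν' (· i = true)
  rw [hcMarginal_eq_hcMass_div, hcMarginal_eq_hcMass_div, hmass, hcZ_snoc hC hG' hν',
    mul_div_mul_left _ _ hα]

theorem hcMarginal_snoc_last (hC : ∀ i ∈ C, ∀ j ∈ C, i ≠ j → A i j)
    (hG' : IsVertexExtension A C G')
    (hν' : ∀ i, ν' i.castSucc = if i ∈ C then (1 + ν' (Fin.last n)) * ν i else ν i)
    (hα : 1 + ν' (Fin.last n) ≠ 0) (hν : ∀ i, 0 ≤ ν i) :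
    hcMarginal (n + 1) G'.Adj ν' (Fin.last n) =
      ν' (Fin.last n) * (1 - ∑ i ∈ C, hcMarginal n A ν i) / (1 + ν' (Fin.last n)) := by
  have hZ : hcZ n A ν ≠ 0 := (zero_lt_one.trans_le (one_le_hcZ hν)).ne'
  have hν'C : ∀ i ∉ C, ν' i.castSucc = ν i := fun i hi => by simp [hν', hi]
  rw [hcMarginal_eq_hcMass_div, hcMass_snoc_last hG' hν'C, hcMass_not,
    hcMass_exists_mem_clique hC, hcZ_snoc hC hG' hν']
  simp only [hcMarginal_eq_hcMass_div, ← sum_div]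
  field_simp

end Extension

/-- Indices are 0-based: the clique `{k+1,…,n}` is `{i | k ≤ i.val}` and the new vertex is
`Fin.last n`. -/
theorem stmt12_general (n k : ℕ) (G : SimpleGraph (Fin n))
    (hclique : ∀ i j : Fin n, k ≤ i.val → k ≤ j.val → i ≠ j → G.Adj i j)
    (ν θ : Fin n → ℝ) (hν : ∀ i, 0 < ν i)
    (hmarg : ∀ i, hcMarginal n G.Adj ν i = θ i)
    (t : ℝ) (ht0 : 0 < t)
    (ht1 : t < 1 - ∑ j ∈ Finset.univ.filter (fun j : Fin n => k ≤ j.val), θ j)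
    (G' : SimpleGraph (Fin (n + 1)))
    (hG'1 : ∀ i j : Fin n, G'.Adj i.castSucc j.castSucc ↔ G.Adj i j)
    (hG'2 : ∀ i : Fin n, G'.Adj (Fin.last n) i.castSucc ↔ k ≤ i.val)
    (ν' : Fin (n + 1) → ℝ)
    (hν'1 : ∀ i : Fin n, i.val < k → ν' i.castSucc = ν i)
    (hν'2 : ∀ i : Fin n, k ≤ i.val → ν' i.castSucc =
      ν i * (1 - ∑ j ∈ Finset.univ.filter (fun j : Fin n => k ≤ j.val), θ j) /
        (1 - t - ∑ j ∈ Finset.univ.filter (fun j : Fin n => k ≤ j.val), θ j))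
    (hν'3 : ν' (Fin.last n) =
      t / (1 - t - ∑ j ∈ Finset.univ.filter (fun j : Fin n => k ≤ j.val), θ j)) :
    (∀ i : Fin n, hcMarginal (n + 1) G'.Adj ν' i.castSucc = θ i) ∧
      hcMarginal (n + 1) G'.Adj ν' (Fin.last n) = t := by
  set C : Finset (Fin n) := univ.filter fun j => k ≤ j.val
  set S := ∑ j ∈ C, θ j with hSdef
  have hD : 0 < 1 - t - S := by linarith
  have h1S : 0 < 1 - S := by linarith
  have hα : 1 + ν' (Fin.last n) = (1 - S) / (1 - t - S) := by
    rw [hν'3]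
    field_simp
    ring
  have hαpos : 0 < 1 + ν' (Fin.last n) := by
    rw [hα]
    exact div_pos h1S hD
  have hC : ∀ i ∈ C, ∀ j ∈ C, i ≠ j → G.Adj i j := by
    simpa [C] using fun i hi j hj => hclique i j hi hj
  have hext : IsVertexExtension G.Adj C G' := ⟨hG'1, by simp [C, hG'2]⟩
  have hν' : ∀ i, ν' i.castSucc = if i ∈ C then (1 + ν' (Fin.last n)) * ν i else ν i := by
    intro i
    by_cases hi : k ≤ i.val
    · simp only [C, mem_filter, mem_univ, true_and, if_pos hi, hν'2 i hi, hα]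
      ring
    · simp [C, hi, hν'1 i (by omega)]
  refine ⟨fun i => ?_, ?_⟩
  · rw [hcMarginal_snoc_castSucc hC hext hν' hαpos.ne', hmarg]
  · rw [hcMarginal_snoc_last hC hext hν' hαpos.ne' fun i => (hν i).le,
      sum_congr rfl fun i _ => hmarg i, ← hSdef, hα, hν'3]
    field_simp

/-- node addition. `G` on `Fin n` (0-based; the clique is
`{i : k ≤ i.val}`, corresponding to 1-based `{k+1,…,n}`), rates `ν` realize
marginals `θ` on `G`. `G'` on `Fin (n+1)` adds the vertex `Fin.last n` adjacent
exactly to the clique; with the rescaled rates `ν'` the marginals are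
`(θ, t)` on `G'`. -/
theorem stmt12 (n k : ℕ) (hk : k ≤ n) (G : SimpleGraph (Fin n))
    (hclique : ∀ i j : Fin n, k ≤ i.val → k ≤ j.val → i ≠ j → G.Adj i j)
    (ν θ : Fin n → ℝ) (hν : ∀ i, 0 < ν i)
    (hmarg : ∀ i, hcMarginal n G.Adj ν i = θ i)
    (hS : ∑ j ∈ Finset.univ.filter (fun j : Fin n => k ≤ j.val), θ j < 1)
    (t : ℝ) (ht0 : 0 < t)
    (ht1 : t < 1 - ∑ j ∈ Finset.univ.filter (fun j : Fin n => k ≤ j.val), θ j)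
    (G' : SimpleGraph (Fin (n + 1)))
    (hG'1 : ∀ i j : Fin n, G'.Adj i.castSucc j.castSucc ↔ G.Adj i j)
    (hG'2 : ∀ i : Fin n, G'.Adj (Fin.last n) i.castSucc ↔ k ≤ i.val)
    (ν' : Fin (n + 1) → ℝ)
    (hν'1 : ∀ i : Fin n, i.val < k → ν' i.castSucc = ν i)
    (hν'2 : ∀ i : Fin n, k ≤ i.val → ν' i.castSucc =
      ν i * (1 - ∑ j ∈ Finset.univ.filter (fun j : Fin n => k ≤ j.val), θ j) /
        (1 - t - ∑ j ∈ Finset.univ.filter (fun j : Fin n => k ≤ j.val), θ j))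
    (hν'3 : ν' (Fin.last n) =
      t / (1 - t - ∑ j ∈ Finset.univ.filter (fun j : Fin n => k ≤ j.val), θ j)) :
    (∀ i : Fin n, hcMarginal (n + 1) G'.Adj ν' i.castSucc = θ i) ∧
      hcMarginal (n + 1) G'.Adj ν' (Fin.last n) = t :=
  stmt12_general n k G hclique ν θ hν hmarg t ht0 ht1 G' hG'1 hG'2 ν' hν'1 hν'2 hν'3
end

section
/- Let G be the 4-cycle on vertices {1,2,3,4} with edges (1,2),(2,3),(3,4),(4,1). There exist positive rates ν_1,...,ν_4 achieving hard-core marginals θ = (θ_1, 1/4, 1/4, 1/4) for all sufficiently small θ_1 > 0, and the required rate ν_3 is not constant in θ_1; in particular, as θ_1 → 0 the required ν_3 tends to 3/4, while at θ_1 = 1/4 (the symmetric fair point) the required ν_3 equals 1/√2. Hence on non-chordal graphs the required back-off rate of a node can depend on the target throughput of a non-neighboring node. -/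
open scoped Classical
open Finset

/-- Adjacency of the 4-cycle on vertices `0,1,2,3` (paper vertices `1,2,3,4`). -/
def c4Adj (a b : Fin 4) : Prop :=
  (a.val + 1) % 4 = b.val ∨ (b.val + 1) % 4 = a.val


/-!
On the 4-cycle the partition function is `1 + ∑ νᵢ + ν₀ν₂ + ν₁ν₃` and vertex `i` carries the
weight `νᵢ (1 + ν_{i+2})`. The one-parameter family `ν₀ = w (2w - 3)`, `ν₁ = ν₃ = w - 1`,
`ν₂ = w / (2w - 1)` (`w > 3/2`) makes the partition function `4w(w - 1)` and gives vertices
`1, 2, 3` marginal `1/4`, while vertex `0` gets `(2w - 3)(3w - 1) / (4(2w - 1)(w - 1))`; setting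
this equal to `θ₀` is a quadratic equation in `w` with a root `w > 3/2` for every `θ₀ ∈ (0, 3/4)`.
As `θ₀ → 0` this root tends to `3/2`, so `ν₂ → 3/4`, while at `θ₀ = 1/4` it is `1 + √2/2`, so
`ν₂ = 1/√2`; as these values differ, `ν₂` cannot be constant in `θ₀`.
-/

theorem Fintype.sum_fin_four_bool {M : Type*} [AddCommMonoid M] (f : (Fin 4 → Bool) → M) :
    ∑ z, f z = ∑ a, ∑ b, ∑ c, ∑ d, f ![a, b, c, d] := by
  let e : Bool × Bool × Bool × Bool ≃ (Fin 4 → Bool) :=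
    { toFun p := ![p.1, p.2.1, p.2.2.1, p.2.2.2]
      invFun z := (z 0, z 1, z 2, z 3)
      left_inv := by decide
      right_inv := by decide }
  simp only [← e.sum_comp, Fintype.sum_prod_type]
  rfl

instance : DecidableRel c4Adj := fun a b => by unfold c4Adj; infer_instance

instance {n : ℕ} (A : Fin n → Fin n → Prop) [DecidableRel A] (z : Fin n → Bool) :
    Decidable (hcIndep A z) := by
  unfold hcIndep; infer_instance

theorem hcIndep_c4Adj_iff (a b c d : Bool) : hcIndep c4Adj ![a, b, c, d] ↔
    (a && b) = false ∧ (b && c) = false ∧ (c && d) = false ∧ (d && a) = false := by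
  revert a b c d; decide

theorem hcZ_c4Adj (ν : Fin 4 → ℝ) :
    hcZ 4 c4Adj ν = 1 + ν 0 + ν 1 + ν 2 + ν 3 + ν 0 * ν 2 + ν 1 * ν 3 := by
  simp only [hcZ, Fintype.sum_fin_four_bool, Fintype.sum_bool, hcIndep_c4Adj_iff, hcWeight,
    Fin.prod_univ_four, Matrix.cons_val, Fin.isValue, Bool.and_true, Bool.and_false,
    Bool.true_and, Bool.false_and]
  norm_num
  ring

theorem hcMarginal_c4Adj (ν : Fin 4 → ℝ) (i : Fin 4) :
    hcMarginal 4 c4Adj ν i = (ν i + ν i * ν (i + 2)) / hcZ 4 c4Adj ν := by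
  rw [hcMarginal, Fintype.sum_fin_four_bool]
  congr 1
  fin_cases i <;>
    simp only [Fintype.sum_bool, hcIndep_c4Adj_iff, hcWeight, Fin.prod_univ_four, Matrix.cons_val,
      Fin.isValue, Fin.reduceFinMk, Fin.reduceAdd, Bool.and_true, Bool.and_false, Bool.true_and,
      Bool.false_and] <;>
    norm_num <;> ring

noncomputable def c4Rates (w : ℝ) : Fin 4 → ℝ :=
  ![w * (2 * w - 3), w - 1, w / (2 * w - 1), w - 1]

noncomputable def c4Throughput (w : ℝ) : ℝ :=
  (2 * w - 3) * (3 * w - 1) / (4 * (2 * w - 1) * (w - 1))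

section c4Rates

variable {w : ℝ}

theorem c4Rates_pos (hw : 3 / 2 < w) (i : Fin 4) : 0 < c4Rates w i := by
  have h2 : 0 < 2 * w - 1 := by linarith
  fin_cases i <;> simp only [c4Rates, Fin.zero_eta, Fin.mk_one, Fin.reduceFinMk, Matrix.cons_val]
  all_goals first | positivity | nlinarith

theorem hcZ_c4Rates (hw : 2 * w - 1 ≠ 0) : hcZ 4 c4Adj (c4Rates w) = 4 * w * (w - 1) := by
  have hq : w / (2 * w - 1) * (2 * w - 1) = w := div_mul_cancel₀ w hw
  rw [hcZ_c4Adj]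
  simp only [c4Rates, Matrix.cons_val]
  linear_combination (w - 1) * hq

theorem hcMarginal_c4Rates (hw : 3 / 2 < w) (i : Fin 4) :
    hcMarginal 4 c4Adj (c4Rates w) i = if i = 0 then c4Throughput w else 1 / 4 := by
  have h2 : 2 * w - 1 ≠ 0 := by linarith
  have hq : w / (2 * w - 1) * (2 * w - 1) = w := div_mul_cancel₀ w h2
  have hZ : 4 * w * (w - 1) ≠ 0 := by nlinarith
  rw [hcMarginal_c4Adj, hcZ_c4Rates h2]
  fin_cases i <;> simp only [c4Rates, Fin.zero_eta, Fin.mk_one, Fin.reduceFinMk, Fin.reduceAdd,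
    Matrix.cons_val, Fin.reduceEq, ↓reduceIte, c4Throughput]
  · rw [div_eq_div_iff hZ (by nlinarith)]
    linear_combination 4 * w * (w - 1) * (2 * w - 3) * hq
  · rw [div_eq_iff hZ]
    ring
  · rw [div_eq_iff hZ]
    linear_combination (w - 1) * hq
  · rw [div_eq_iff hZ]
    ring

end c4Rates

/-- The root `w > 3 / 2` of `(6 - 8t) w² + (12t - 11) w + (3 - 4t) = 0`, which is the equation
`c4Throughput w = t` with denominators cleared. -/
noncomputable def c4Root (t : ℝ) : ℝ :=
  (11 - 12 * t + √(16 * t ^ 2 - 72 * t + 49)) / (12 - 16 * t)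

section c4Root

variable {t : ℝ}

theorem three_halves_lt_c4Root (ht₀ : 0 < t) (ht : t < 3 / 4) : 3 / 2 < c4Root t := by
  have hsqrt : 7 - 12 * t < √(16 * t ^ 2 - 72 * t + 49) := Real.lt_sqrt_of_sq_lt (by nlinarith)
  rw [c4Root, lt_div_iff₀ (by linarith)]
  linarith

theorem c4Throughput_c4Root (ht₀ : 0 < t) (ht : t < 3 / 4) : c4Throughput (c4Root t) = t := by
  have hw := three_halves_lt_c4Root ht₀ ht
  have hmul : c4Root t * (12 - 16 * t) = 11 - 12 * t + √(16 * t ^ 2 - 72 * t + 49) :=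
    div_mul_cancel₀ _ (by linarith)
  have hsq : √(16 * t ^ 2 - 72 * t + 49) ^ 2 = 16 * t ^ 2 - 72 * t + 49 :=
    Real.sq_sqrt (by nlinarith)
  -- `2 (12 - 16t) (quadratic) = ((12 - 16t) w - (11 - 12t))² - discriminant`
  have hQ : (12 - 16 * t) * ((2 * c4Root t - 3) * (3 * c4Root t - 1)
      - t * (4 * (2 * c4Root t - 1) * (c4Root t - 1))) = 0 := by
    linear_combination (1 / 2) * hsq + (1 / 2) *
      ((12 - 16 * t) * c4Root t - (11 - 12 * t) + √(16 * t ^ 2 - 72 * t + 49)) * hmul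
  rw [c4Throughput, div_eq_iff (by nlinarith)]
  linarith [(mul_eq_zero.1 hQ).resolve_left (by linarith)]

theorem continuousAt_c4Root (ht : t ≠ 3 / 4) : ContinuousAt c4Root t := by
  unfold c4Root
  fun_prop (disch := (contrapose! ht; linarith))

theorem c4Root_zero : c4Root 0 = 3 / 2 := by
  rw [c4Root, show (16 * 0 ^ 2 - 72 * 0 + 49 : ℝ) = 7 ^ 2 by norm_num, Real.sqrt_sq (by norm_num)]
  norm_num

theorem c4Root_quarter : c4Root (1 / 4) = 1 + √2 / 2 := by
  rw [c4Root, show (16 * (1 / 4) ^ 2 - 72 * (1 / 4) + 49 : ℝ) = 4 ^ 2 * 2 by norm_num,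
    Real.sqrt_mul (by norm_num), Real.sqrt_sq (by norm_num)]
  ring

end c4Root

open Filter Topology in
theorem exists_ne_of_tendsto_nhdsGT {X : Type*} [TopologicalSpace X] [T2Space X] {f : ℝ → X}
    {a b : ℝ} {c : X} (hab : a < b)
    (hf : Tendsto f (𝓝[>] a) (𝓝 c)) (hb : f b ≠ c) : ∃ s ∈ Set.Ioc a b, f s ≠ f b := by
  by_contra! hconst
  have hf' : Tendsto f (𝓝[>] a) (𝓝 (f b)) :=
    tendsto_const_nhds.congr' <|
      eventually_of_mem (Ioc_mem_nhdsGT hab) fun s hs => (hconst s hs).symm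
  exact hb (tendsto_nhds_unique hf' hf)

open Filter Topology in
theorem tendsto_c4Rates_c4Root_two :
    Tendsto (fun t => c4Rates (c4Root t) 2) (𝓝[>] 0) (𝓝 (3 / 4)) := by
  have hc := continuousAt_c4Root (t := 0) (by norm_num)
  have h : ContinuousAt (fun t => c4Root t / (2 * c4Root t - 1)) 0 :=
    hc.div (by fun_prop) (by norm_num [c4Root_zero])
  have hval : c4Root 0 / (2 * c4Root 0 - 1) = 3 / 4 := by norm_num [c4Root_zero]
  exact hval ▸ h.tendsto.mono_left nhdsWithin_le_nhds

theorem c4Rates_c4Root_quarter_two : c4Rates (c4Root (1 / 4)) 2 = 1 / √2 := by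
  have hs : √2 * √2 = 2 := Real.mul_self_sqrt zero_le_two
  simp only [c4Rates, Matrix.cons_val, c4Root_quarter]
  rw [div_eq_div_iff (by nlinarith [Real.sqrt_nonneg 2]) (by positivity)]
  linear_combination hs / 2

/-- on the 4-cycle there are positive rates achieving marginals
`(θ₁, 1/4, 1/4, 1/4)` for every `θ₁ ∈ (0, 1/4]` (in particular for all sufficiently
small `θ₁ > 0`); the required rate of node 3 (vertex `2` here, non-adjacent to
vertex `0`) is not constant in `θ₁`: it tends to `3/4` as `θ₁ → 0⁺` and equals
`1/√2` at `θ₁ = 1/4`. -/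
theorem stmt15 :
    ∃ ν : ℝ → Fin 4 → ℝ,
      (∀ t ∈ Set.Ioc (0 : ℝ) (1 / 4),
        (∀ i, 0 < ν t i) ∧
        ∀ i : Fin 4, hcMarginal 4 c4Adj (ν t) i = if i = 0 then t else 1 / 4) ∧
      (∃ s t, s ∈ Set.Ioc (0 : ℝ) (1 / 4) ∧ t ∈ Set.Ioc (0 : ℝ) (1 / 4) ∧
        ν s 2 ≠ ν t 2) ∧
      Filter.Tendsto (fun t => ν t 2) (nhdsWithin 0 (Set.Ioi 0)) (nhds (3 / 4)) ∧
      ν (1 / 4) 2 = 1 / Real.sqrt 2 := by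
  refine ⟨fun t => c4Rates (c4Root t), fun t ht => ?_, ?_, tendsto_c4Rates_c4Root_two,
    c4Rates_c4Root_quarter_two⟩
  · have ht' : t < 3 / 4 := by linarith [ht.2]
    have hw := three_halves_lt_c4Root ht.1 ht'
    refine ⟨c4Rates_pos hw, fun i => ?_⟩
    rw [hcMarginal_c4Rates hw, c4Throughput_c4Root ht.1 ht']
  · have hquarter_ne : 1 / √2 ≠ 3 / 4 := by
      intro h
      have hs : √2 * √2 = 2 := Real.mul_self_sqrt zero_le_two
      field_simp at h
      nlinarith
    obtain ⟨s, hs, hne⟩ := exists_ne_of_tendsto_nhdsGT (by norm_num) tendsto_c4Rates_c4Root_two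
      (c4Rates_c4Root_quarter_two ▸ hquarter_ne)
    exact ⟨s, 1 / 4, hs, Set.right_mem_Ioc.2 (by norm_num), hne⟩
end

section
/- Let α be a perfect elimination ordering of a chordal graph G on n vertices and, for j = n down to 1, define trees T^{(j)} recursively: T^{(n)} has single node {α(n)}; given T^{(j+1)}, let M = N_{α(j)} ∩ {α(j+1),...,α(n)}; if M is itself a maximal clique (node) of T^{(j+1)}, replace that node by M ∪ {α(j)}; otherwise add a new node M ∪ {α(j)} adjacent to some maximal clique K of T^{(j+1)} containing M. Then each T^{(j)} is a clique tree of the subgraph of G induced by {α(j),...,α(n)}; in particular T^{(1)} is a clique tree of G. -/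
/-!
Write `a = α j`, `W = {α(j+1), …}` and `M` for the later neighbours of `a`. Since `M` is a
clique, every clique of `W ∪ {a}` through `a` lies in `M ∪ {a}`, so the maximal cliques of
`W ∪ {a}` are `M ∪ {a}` together with the maximal cliques of `W` other than `M`.
If `M` is a node of `T^{(j+1)}`, renaming it to `M ∪ {a}` is a tree isomorphism that leaves the
node set of every `v ∈ W` unchanged up to this renaming. Otherwise `M ∪ {a}` is attached as a
leaf to a node `K ⊇ M`: a leaf creates no cycle, and it joins the subtree of each `v ∈ M`
through `K`. In both cases the only node containing `a` is `M ∪ {a}`.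
-/

open scoped Classical
open Finset

/-- The vertices `{α(j), α(j+1), …, α(n−1)}` occurring from position `j` on in the
ordering `α` (0-based positions). -/
noncomputable def peoLater (n : ℕ) (α : ℕ → Fin n) (j : ℕ) : Finset (Fin n) :=
  Finset.univ.filter (fun v => ∃ i, j ≤ i ∧ i < n ∧ α i = v)

/-- The later neighbors `M = N_{α(j)} ∩ {α(j+1),…,α(n−1)}` of the vertex in
position `j`. -/
noncomputable def laterNbrs {n : ℕ} (G : SimpleGraph (Fin n)) (α : ℕ → Fin n) (j : ℕ) :
    Finset (Fin n) :=
  Finset.univ.filter (fun v => G.Adj (α j) v ∧ v ∈ peoLater n α (j + 1))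

/-- `K` is a maximal clique of the subgraph of `G` induced by the vertex set `W`. -/
def IsMaxCliqueIn {n : ℕ} (G : SimpleGraph (Fin n)) (W K : Finset (Fin n)) : Prop :=
  K ⊆ W ∧ G.IsClique ↑K ∧
    ∀ K' : Finset (Fin n), K' ⊆ W → G.IsClique ↑K' → K ⊆ K' → K = K'

/-- `(Vs, Es)` is a clique tree of the subgraph of `G` induced by `W`: the nodes `Vs`
are exactly the maximal cliques of that subgraph, the edges `Es` join nodes of `Vs`,
the resulting graph is a tree, and for every vertex `v ∈ W` the cliques containing
`v` induce a connected subgraph (hence a subtree). -/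
def IsCliqueTreeOn {n : ℕ} (G : SimpleGraph (Fin n)) (W : Finset (Fin n))
    (Vs : Finset (Finset (Fin n))) (Es : Finset (Sym2 (Finset (Fin n)))) : Prop :=
  (∀ K, K ∈ Vs ↔ IsMaxCliqueIn G W K) ∧
  (∀ e ∈ Es, ∀ K ∈ e, K ∈ Vs) ∧
  ((SimpleGraph.fromEdgeSet (↑Es : Set (Sym2 (Finset (Fin n))))).induce
      (↑Vs : Set (Finset (Fin n)))).IsTree ∧
  ∀ v ∈ W,
    ((SimpleGraph.fromEdgeSet (↑Es : Set (Sym2 (Finset (Fin n))))).induce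
        {K : Finset (Fin n) | K ∈ Vs ∧ v ∈ K}).Connected

namespace SimpleGraph

variable {V V' : Type*}

noncomputable def induceIsoOfBijOn {H : SimpleGraph V} {H' : SimpleGraph V'} {S : Set V}
    {T : Set V'} {f : V → V'} (hf : Set.BijOn f S T)
    (hadj : ∀ a ∈ S, ∀ b ∈ S, H'.Adj (f a) (f b) ↔ H.Adj a b) :
    H.induce S ≃g H'.induce T :=
  ⟨hf.equiv f, fun {a b} => hadj a a.2 b b.2⟩

lemma fromEdgeSet_image_adj_iff {E : Set (Sym2 V)} {S : Set V} {f : V → V'}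
    (hf : Set.InjOn f S) (hE : ∀ e ∈ E, ∀ z ∈ e, z ∈ S) {a b : V} (ha : a ∈ S)
    (hb : b ∈ S) :
    (fromEdgeSet (Sym2.map f '' E)).Adj (f a) (f b) ↔ (fromEdgeSet E).Adj a b := by
  simp only [fromEdgeSet_adj, Set.mem_image, hf.ne_iff ha hb]
  refine and_congr_left fun _ => ⟨?_, fun h => ⟨_, h, Sym2.map_mk f a b⟩⟩
  rintro ⟨e, he, hfe⟩
  induction e using Sym2.ind with
  | _ c d =>
    have hc : c ∈ S := hE _ he c (Sym2.mem_mk_left c d)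
    have hd : d ∈ S := hE _ he d (Sym2.mem_mk_right c d)
    rw [Sym2.map_mk, Sym2.eq_iff] at hfe
    rcases hfe with ⟨hca, hdb⟩ | ⟨hcb, hda⟩
    · rwa [← hf hc ha hca, ← hf hd hb hdb]
    · rwa [← hf hc hb hcb, ← hf hd ha hda, Sym2.eq_swap]

lemma induce_fromEdgeSet_insert_of_notMem {E : Set (Sym2 V)} {S : Set V} {x y : V}
    (hx : x ∉ S) : (fromEdgeSet (insert s(x, y) E)).induce S = (fromEdgeSet E).induce S := by
  ext a b
  simp only [comap_adj, Function.Embedding.coe_subtype, fromEdgeSet_adj, Set.mem_insert_iff]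
  refine and_congr_left fun _ => or_iff_right fun h => ?_
  rcases Sym2.eq_iff.mp h with ⟨ha, -⟩ | ⟨-, hb⟩
  · exact hx (ha ▸ a.2)
  · exact hx (hb ▸ b.2)

lemma eq_of_fromEdgeSet_insert_adj {E : Set (Sym2 V)} {S : Set V} {x y z : V}
    (hE : ∀ e ∈ E, ∀ w ∈ e, w ∈ S) (hx : x ∉ S) :
    (fromEdgeSet (insert s(x, y) E)).Adj x z → z = y := by
  rw [fromEdgeSet_adj, Set.mem_insert_iff]
  rintro ⟨h | h, -⟩
  · exact Sym2.congr_right.mp h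
  · exact absurd (hE _ h x (Sym2.mem_mk_left x z)) hx

lemma connected_induce_insert {H : SimpleGraph V} {S : Set V} {x y : V} (hy : y ∈ S)
    (hxy : H.Adj x y) (hS : (H.induce S).Connected) : (H.induce (insert x S)).Connected := by
  rw [Set.insert_eq]
  exact connected_induce_union Preconnected.of_subsingleton hS.preconnected
    (Set.mem_singleton x) hy hxy

lemma isAcyclic_induce_insert {H : SimpleGraph V} {S : Set V} {x y : V}
    (hx : ∀ z, H.Adj x z → z = y) (hS : (H.induce S).IsAcyclic) :
    (H.induce (insert x S)).IsAcyclic := by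
  classical
  intro v c hc
  by_cases hxc : ⟨x, Set.mem_insert x S⟩ ∈ c.support
  · -- a cycle through `x` would leave and re-enter it through its only neighbour `y`
    have hc' := hc.rotate hxc
    refine hc'.snd_ne_penultimate (Subtype.ext ?_)
    rw [hx _ (induce_adj.mp (Walk.adj_snd hc'.not_nil)),
      hx _ (induce_adj.mp (Walk.adj_penultimate hc'.not_nil).symm)]
  · let c' := c.map (Embedding.induce (insert x S)).toHom
    have hsupp : ∀ z ∈ c'.support, z ∈ S := by
      intro z hz
      obtain ⟨w, hw, rfl⟩ := List.mem_map.mp (Walk.support_map _ c ▸ hz)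
      refine w.2.resolve_left fun h => hxc ?_
      rwa [← (Subtype.ext h : w = ⟨x, Set.mem_insert x S⟩)]
    refine hS (c'.induce S hsupp) ?_
    rw [← Walk.isCycle_map_iff_of_injective (f := (Embedding.induce S).toHom)
      Subtype.val_injective, Walk.map_induce]
    exact hc.map Subtype.val_injective

lemma isTree_induce_fromEdgeSet_insert {E : Set (Sym2 V)} {S : Set V} {x y : V}
    (hE : ∀ e ∈ E, ∀ z ∈ e, z ∈ S) (hx : x ∉ S) (hy : y ∈ S)
    (hT : ((fromEdgeSet E).induce S).IsTree) :
    ((fromEdgeSet (insert s(x, y) E)).induce (insert x S)).IsTree := by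
  have hS := induce_fromEdgeSet_insert_of_notMem (E := E) (y := y) hx
  have hxy : (fromEdgeSet (insert s(x, y) E)).Adj x y :=
    (fromEdgeSet_adj _).mpr ⟨Set.mem_insert _ _, fun h => hx (h ▸ hy)⟩
  exact ⟨connected_induce_insert hy hxy (hS ▸ hT.connected),
    isAcyclic_induce_insert (fun _ => eq_of_fromEdgeSet_insert_adj hE hx) (hS ▸ hT.isAcyclic)⟩

lemma connected_induce_fromEdgeSet_insert {E : Set (Sym2 V)} {S : Set V} {x y : V}
    (hx : x ∉ S) (hy : y ∈ S) (hS : ((fromEdgeSet E).induce S).Connected) :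
    ((fromEdgeSet (insert s(x, y) E)).induce (insert x S)).Connected := by
  refine connected_induce_insert hy ((fromEdgeSet_adj _).mpr
    ⟨Set.mem_insert _ _, fun h => hx (h ▸ hy)⟩) ?_
  rwa [induce_fromEdgeSet_insert_of_notMem hx]

lemma connected_induce_singleton (H : SimpleGraph V) (x : V) : (H.induce {x}).Connected :=
  ⟨Preconnected.of_subsingleton⟩

end SimpleGraph

lemma Finset.bijOn_ite_insert_sdiff {α : Type*} [DecidableEq α] {s : Finset α} {x y : α}
    (hx : x ∈ s) (hy : y ∉ s) :
    Set.BijOn (fun z => if z = x then y else z) ↑s ↑(insert y (s \ {x})) := by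
  refine ⟨fun z hz => ?_, fun z hz w hw h => ?_, fun z hz => ?_⟩
  · by_cases hzx : z = x <;> simp_all
  · by_cases hzx : z = x <;> by_cases hwx : w = x <;> simp_all
  · simp only [Finset.coe_insert, Finset.coe_sdiff, Set.mem_insert_iff, Set.mem_sdiff,
      Finset.mem_coe, Finset.coe_singleton, Set.mem_singleton_iff] at hz
    rcases hz with rfl | ⟨hz, hzx⟩
    · exact ⟨x, hx, if_pos rfl⟩
    · exact ⟨z, hz, if_neg hzx⟩

section

variable {n : ℕ} {G : SimpleGraph (Fin n)}

section MaxClique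

variable {W M K : Finset (Fin n)} {a : Fin n}

lemma isMaxCliqueIn_singleton : IsMaxCliqueIn G {a} K ↔ K = {a} := by
  have hclique : G.IsClique (({a} : Finset (Fin n)) : Set (Fin n)) := by simp
  refine ⟨fun ⟨hKa, _, hmax⟩ => ?_, ?_⟩
  · rcases Finset.subset_singleton_iff.mp hKa with rfl | rfl
    · exact hmax {a} subset_rfl hclique (Finset.empty_subset _)
    · rfl
  · rintro rfl
    exact ⟨subset_rfl, hclique, fun K' hK' _ hsub => subset_antisymm hsub hK'⟩

variable (hM : ∀ v, v ∈ M ↔ G.Adj a v ∧ v ∈ W) (hMc : G.IsClique (M : Set (Fin n)))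
include hM

omit hMc in
lemma subset_insert_of_isClique (hK : G.IsClique (K : Set (Fin n))) (hKW : K ⊆ insert a W)
    (haK : a ∈ K) : K ⊆ insert a M := by
  intro v hv
  rw [Finset.mem_insert, hM]
  by_cases hva : v = a
  · exact Or.inl hva
  · exact Or.inr ⟨hK haK hv (Ne.symm hva), (Finset.mem_insert.mp (hKW hv)).resolve_left hva⟩

include hMc

lemma isMaxCliqueIn_insert_self : IsMaxCliqueIn G (insert a W) (insert a M) := by
  have hMW : M ⊆ W := fun v hv => ((hM v).mp hv).2
  refine ⟨Finset.insert_subset_insert a hMW, ?_, fun K' hK'W hK' hsub => subset_antisymm hsub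
    (subset_insert_of_isClique hM hK' hK'W (hsub (Finset.mem_insert_self a M)))⟩
  rw [Finset.coe_insert, SimpleGraph.isClique_insert]
  exact ⟨hMc, fun v hv _ => ((hM v).mp hv).1⟩

lemma isMaxCliqueIn_insert_iff (ha : a ∉ W) :
    IsMaxCliqueIn G (insert a W) K ↔ K = insert a M ∨ (IsMaxCliqueIn G W K ∧ K ≠ M) := by
  have hMW : M ⊆ W := fun v hv => ((hM v).mp hv).2
  obtain ⟨hMaW, hMa, -⟩ := isMaxCliqueIn_insert_self hM hMc
  have hsubW {K' : Finset (Fin n)} (hK' : K' ⊆ W) : K' ⊆ insert a W :=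
    hK'.trans (Finset.subset_insert a W)
  constructor
  · rintro ⟨hKW, hK, hmax⟩
    by_cases haK : a ∈ K
    · exact Or.inl (hmax _ hMaW hMa (subset_insert_of_isClique hM hK hKW haK))
    · have hKW' : K ⊆ W := (Finset.subset_insert_iff_of_notMem haK).mp hKW
      refine Or.inr ⟨⟨hKW', hK, fun K' hK'W hK' => hmax K' (hsubW hK'W) hK'⟩, ?_⟩
      rintro rfl
      exact haK (hmax _ hMaW hMa (Finset.subset_insert a K) ▸ Finset.mem_insert_self a K)
  · rintro (rfl | ⟨⟨hKW, hK, hmax⟩, hKM⟩)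
    · exact isMaxCliqueIn_insert_self hM hMc
    refine ⟨hsubW hKW, hK, fun K' hK'W hK' hsub => ?_⟩
    by_cases haK' : a ∈ K'
    · have haK : a ∉ K := fun h => ha (hKW h)
      have hKM' : K ⊆ M := (Finset.subset_insert_iff_of_notMem haK).mp
        (hsub.trans (subset_insert_of_isClique hM hK' hK'W haK'))
      exact absurd (hmax M hMW hMc hKM') hKM
    · exact hmax K' ((Finset.subset_insert_iff_of_notMem haK').mp hK'W) hK' hsub

end MaxClique

section EliminationOrdering

variable {α : ℕ → Fin n} {j : ℕ}

lemma mem_peoLater {v : Fin n} :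
    v ∈ peoLater n α j ↔ ∃ i, j ≤ i ∧ i < n ∧ α i = v := by
  simp [peoLater]

lemma peoLater_eq_insert (hj : j < n) :
    peoLater n α j = insert (α j) (peoLater n α (j + 1)) := by
  ext v
  simp only [mem_peoLater, Finset.mem_insert]
  constructor
  · rintro ⟨i, hji, hin, rfl⟩
    rcases hji.eq_or_lt with rfl | hji
    · exact Or.inl rfl
    · exact Or.inr ⟨i, hji, hin, rfl⟩
  · rintro (rfl | ⟨i, hji, hin, rfl⟩)
    · exact ⟨j, le_rfl, hj, rfl⟩
    · exact ⟨i, by omega, hin, rfl⟩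

lemma peoLater_pred (hn : 0 < n) : peoLater n α (n - 1) = {α (n - 1)} := by
  ext v
  simp only [mem_peoLater, Finset.mem_singleton]
  constructor
  · rintro ⟨i, h1, h2, rfl⟩
    rw [show i = n - 1 by omega]
  · rintro rfl
    exact ⟨n - 1, le_rfl, by omega, rfl⟩

lemma apply_notMem_peoLater_succ (hα : ∀ v : Fin n, ∃! j, j < n ∧ α j = v) (hj : j < n) :
    α j ∉ peoLater n α (j + 1) := by
  rw [mem_peoLater]
  rintro ⟨i, hji, hin, hi⟩
  obtain ⟨k, -, hk⟩ := hα (α j)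
  have := (hk i ⟨hin, hi⟩).trans (hk j ⟨hj, rfl⟩).symm
  omega

lemma mem_laterNbrs {v : Fin n} :
    v ∈ laterNbrs G α j ↔ G.Adj (α j) v ∧ v ∈ peoLater n α (j + 1) := by
  simp [laterNbrs]

end EliminationOrdering

section CliqueTree

open SimpleGraph

variable {W M : Finset (Fin n)} {a : Fin n} {Vs : Finset (Finset (Fin n))}
  {Es : Finset (Sym2 (Finset (Fin n)))}

lemma isCliqueTreeOn_singleton : IsCliqueTreeOn G {a} {{a}} ∅ := by
  refine ⟨fun K => by rw [Finset.mem_singleton, isMaxCliqueIn_singleton], by simp, ?_,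
    fun v hv => ?_⟩
  · rw [Finset.coe_singleton]
    exact IsTree.of_subsingleton
  · obtain rfl := Finset.mem_singleton.mp hv
    have hnodes : {K | K ∈ ({{v}} : Finset (Finset (Fin n))) ∧ v ∈ K} = {{v}} := by
      ext K
      simp +contextual
    rw [hnodes]
    exact connected_induce_singleton _ _

lemma setOf_mem_and_mem_eq_singleton (hVW : ∀ K ∈ Vs, K ⊆ W) (ha : a ∉ W)
    {Vs' : Finset (Finset (Fin n))}
    (hVs' : ∀ K, K ∈ Vs' ↔ K = insert a M ∨ (K ∈ Vs ∧ K ≠ M)) :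
    {K | K ∈ Vs' ∧ a ∈ K} = {insert a M} := by
  ext K
  simp only [Set.mem_ofPred_eq, Set.mem_singleton_iff, hVs']
  constructor
  · rintro ⟨rfl | ⟨hK, -⟩, haK⟩
    · rfl
    · exact absurd (hVW K hK haK) ha
  · rintro rfl
    exact ⟨Or.inl rfl, Finset.mem_insert_self a M⟩

variable (hT : IsCliqueTreeOn G W Vs Es) (ha : a ∉ W)
  (hnodes : ∀ K, IsMaxCliqueIn G (insert a W) K ↔
    K = insert a M ∨ (IsMaxCliqueIn G W K ∧ K ≠ M))
include hT ha hnodes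

lemma IsCliqueTreeOn.replaceNode (hM : M ∈ Vs) :
    IsCliqueTreeOn G (insert a W) (insert (insert a M) (Vs \ {M}))
      (Es.image (Sym2.map fun K => if K = M then insert a M else K)) := by
  obtain ⟨hV, hE, htree, hsub⟩ := hT
  have hVW : ∀ K ∈ Vs, K ⊆ W := fun K hK => ((hV K).mp hK).1
  have hbij :=
    Finset.bijOn_ite_insert_sdiff hM fun h => ha (hVW _ h (Finset.mem_insert_self a M))
  set r : Finset (Fin n) → Finset (Fin n) := fun K => if K = M then insert a M else K
  have hadj : ∀ A ∈ (Vs : Set _), ∀ B ∈ (Vs : Set _),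
      (fromEdgeSet ↑(Es.image (Sym2.map r))).Adj (r A) (r B) ↔ (fromEdgeSet ↑Es).Adj A B := by
    intro A hA B hB
    rw [Finset.coe_image]
    exact fromEdgeSet_image_adj_iff hbij.injOn hE hA hB
  have hV' : ∀ K, K ∈ insert (insert a M) (Vs \ {M}) ↔
      K = insert a M ∨ (K ∈ Vs ∧ K ≠ M) := by
    simp
  refine ⟨fun K => by rw [hV', hnodes, hV], ?_,
    (induceIsoOfBijOn hbij hadj).isTree_iff.mp htree, fun v hv => ?_⟩
  · simp only [Finset.mem_image]
    rintro _ ⟨e, he, rfl⟩ K hK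
    obtain ⟨A, hA, rfl⟩ := Sym2.mem_map.mp hK
    exact hbij.mapsTo (hE e he A hA)
  rcases Finset.mem_insert.mp hv with rfl | hvW
  · rw [setOf_mem_and_mem_eq_singleton hVW ha hV']
    exact connected_induce_singleton _ _
  · have hvr : ∀ K, v ∈ r K ↔ v ∈ K := by
      intro K
      by_cases hK : K = M
      · simp only [r, hK, if_true, Finset.mem_insert, or_iff_right_iff_imp]
        rintro rfl
        exact absurd hvW ha
      · simp only [r, hK, if_false]
    have hbij' : Set.BijOn r {K | K ∈ Vs ∧ v ∈ K}
        {K | K ∈ insert (insert a M) (Vs \ {M}) ∧ v ∈ K} :=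
      hbij.inter_mapsTo (s₂ := {K | v ∈ K}) (t₂ := {K | v ∈ K}) (fun K hK => (hvr K).mpr hK)
        fun K hK => (hvr K).mp hK.2
    exact (induceIsoOfBijOn hbij' fun A hA B hB => hadj A hA.1 B hB.1).connected_iff.mp
      (hsub v hvW)

lemma IsCliqueTreeOn.attachLeaf {K₀ : Finset (Fin n)} (hM : M ∉ Vs) (hK₀ : K₀ ∈ Vs)
    (hMK₀ : M ⊆ K₀) :
    IsCliqueTreeOn G (insert a W) (insert (insert a M) Vs) (insert s(insert a M, K₀) Es) := by
  obtain ⟨hV, hE, htree, hsub⟩ := hT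
  have hVW : ∀ K ∈ Vs, K ⊆ W := fun K hK => ((hV K).mp hK).1
  have haV : insert a M ∉ Vs := fun h => ha (hVW _ h (Finset.mem_insert_self a M))
  have hV' : ∀ K, K ∈ insert (insert a M) Vs ↔ K = insert a M ∨ (K ∈ Vs ∧ K ≠ M) := by
    intro K
    rw [Finset.mem_insert]
    exact or_congr_right ⟨fun hK => ⟨hK, fun h => hM (h ▸ hK)⟩, And.left⟩
  have hE' : ∀ e ∈ (Es : Set (Sym2 (Finset (Fin n)))), ∀ K ∈ e, K ∈ (Vs : Set _) := hE
  refine ⟨fun K => by rw [hV', hnodes, hV], ?_, ?_, fun v hv => ?_⟩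
  · intro e he K hK
    rcases Finset.mem_insert.mp he with rfl | he
    · rcases Sym2.mem_iff.mp hK with rfl | rfl
      · exact Finset.mem_insert_self _ _
      · exact Finset.mem_insert_of_mem hK₀
    · exact Finset.mem_insert_of_mem (hE e he K hK)
  · rw [Finset.coe_insert, Finset.coe_insert]
    exact isTree_induce_fromEdgeSet_insert hE' haV hK₀ htree
  rw [Finset.coe_insert]
  rcases Finset.mem_insert.mp hv with rfl | hv
  · rw [setOf_mem_and_mem_eq_singleton hVW ha hV']
    exact connected_induce_singleton _ _
  have haV' : insert a M ∉ {K | K ∈ Vs ∧ v ∈ K} := fun h => haV h.1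
  by_cases hvM : v ∈ M
  · have hset : {K | K ∈ insert (insert a M) Vs ∧ v ∈ K} =
        insert (insert a M) {K | K ∈ Vs ∧ v ∈ K} := by
      ext K
      simp only [Set.mem_ofPred_eq, Set.mem_insert_iff, Finset.mem_insert]
      grind
    rw [hset]
    exact connected_induce_fromEdgeSet_insert haV' ⟨hK₀, hMK₀ hvM⟩ (hsub v hv)
  · have hset : {K | K ∈ insert (insert a M) Vs ∧ v ∈ K} = {K | K ∈ Vs ∧ v ∈ K} := by
      ext K
      simp only [Set.mem_ofPred_eq, Finset.mem_insert]
      grind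
    rw [hset, induce_fromEdgeSet_insert_of_notMem haV']
    exact hsub v hv

end CliqueTree

end

theorem stmt17_general (n : ℕ) (G : SimpleGraph (Fin n))
    (α : ℕ → Fin n) (hα : ∀ v : Fin n, ∃! j, j < n ∧ α j = v)
    (hpeo : ∀ j < n, G.IsClique (↑(laterNbrs G α j) : Set (Fin n)))
    (Vs : ℕ → Finset (Finset (Fin n))) (Es : ℕ → Finset (Sym2 (Finset (Fin n))))
    (hbaseV : Vs (n - 1) = {({α (n - 1)} : Finset (Fin n))})
    (hbaseE : Es (n - 1) = ∅)
    (hstep : ∀ j, j + 1 < n →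
      (laterNbrs G α j ∈ Vs (j + 1) ∧
        Vs j = insert (insert (α j) (laterNbrs G α j))
          (Vs (j + 1) \ {laterNbrs G α j}) ∧
        Es j = (Es (j + 1)).image (Sym2.map (fun K =>
          if K = laterNbrs G α j then insert (α j) (laterNbrs G α j) else K))) ∨
      (laterNbrs G α j ∉ Vs (j + 1) ∧
        ∃ K ∈ Vs (j + 1), laterNbrs G α j ⊆ K ∧
          Vs j = insert (insert (α j) (laterNbrs G α j)) (Vs (j + 1)) ∧
          Es j = insert s(insert (α j) (laterNbrs G α j), K) (Es (j + 1)))) :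
    ∀ j < n, IsCliqueTreeOn G (peoLater n α j) (Vs j) (Es j) := by
  intro j hj
  refine Nat.decreasingInduction
    (motive := fun i _ => IsCliqueTreeOn G (peoLater n α i) (Vs i) (Es i))
    (fun i hi hT => ?_) ?_ (Nat.le_sub_one_of_lt hj)
  · have hin : i < n := by omega
    have ha := apply_notMem_peoLater_succ hα hin
    have hnodes := fun K =>
      isMaxCliqueIn_insert_iff (K := K) (fun _ => mem_laterNbrs) (hpeo i hin) ha
    rw [peoLater_eq_insert hin]
    rcases hstep i (by omega) with ⟨hM, hV, hE⟩ | ⟨hM, K, hK, hMK, hV, hE⟩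
    · rw [hV, hE]
      exact hT.replaceNode ha hnodes hM
    · rw [hV, hE]
      exact hT.attachLeaf ha hnodes hM hK hMK
  · rw [hbaseV, hbaseE, peoLater_pred (by omega)]
    exact isCliqueTreeOn_singleton

/-- given a perfect elimination ordering `α` of a chordal graph `G`
and trees `T^{(j)} = (Vs j, Es j)` built by the recursive construction (base case at
position `n−1`; at each step either the node `M` is replaced by `M ∪ {α(j)}`, or a
new node `M ∪ {α(j)}` is attached to some node `K ⊇ M`), every `T^{(j)}` is a clique
tree of the subgraph induced by `{α(j),…,α(n−1)}`; in particular `T^{(0)}` is a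
clique tree of `G`. -/
theorem stmt17 (n : ℕ) (hn : 0 < n) (G : SimpleGraph (Fin n))
    (α : ℕ → Fin n) (hα : ∀ v : Fin n, ∃! j, j < n ∧ α j = v)
    (hpeo : ∀ j < n, G.IsClique (↑(laterNbrs G α j) : Set (Fin n)))
    (Vs : ℕ → Finset (Finset (Fin n))) (Es : ℕ → Finset (Sym2 (Finset (Fin n))))
    (hbaseV : Vs (n - 1) = {({α (n - 1)} : Finset (Fin n))})
    (hbaseE : Es (n - 1) = ∅)
    (hstep : ∀ j, j + 1 < n →
      (laterNbrs G α j ∈ Vs (j + 1) ∧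
        Vs j = insert (insert (α j) (laterNbrs G α j))
          (Vs (j + 1) \ {laterNbrs G α j}) ∧
        Es j = (Es (j + 1)).image (Sym2.map (fun K =>
          if K = laterNbrs G α j then insert (α j) (laterNbrs G α j) else K))) ∨
      (laterNbrs G α j ∉ Vs (j + 1) ∧
        ∃ K ∈ Vs (j + 1), laterNbrs G α j ⊆ K ∧
          Vs j = insert (insert (α j) (laterNbrs G α j)) (Vs (j + 1)) ∧
          Es j = insert s(insert (α j) (laterNbrs G α j), K) (Es (j + 1)))) :
    ∀ j < n, IsCliqueTreeOn G (peoLater n α j) (Vs j) (Es j) :=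
  stmt17_general n G α hα hpeo Vs Es hbaseV hbaseE hstep
end
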